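/- arXiv:1509.03618 — 5 statements merged into one kernel-verified Lean document; each statement's English description precedes it below -/
import Mathlib

section
/- There is no Kochen–Specker coloring of the idempotents of the ring M₃(ℤ) of 3×3 integer matrices (Matrix (Fin 3) (Fin 3) ℤ). -/
/-- A Kochen–Specker coloring of the idempotents of a ring `M`: a function `c` from the set
of idempotents of `M` to `Bool` such that for every finite family of pairwise orthogonal
idempotents, at most one member is colored `true`, and if moreover the family sums to `1`,
then exactly one member is colored `true`. -/
def IsKSColoring {M : Type*} [Ring M] (c : {e : M // e * e = e} → Bool) : Prop :=
  ∀ (k : ℕ) (e : Fin k → {e : M // e * e = e}),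
    (∀ i j : Fin k, i ≠ j → (e i : M) * (e j : M) = 0) →
    ((∀ i j : Fin k, c (e i) = true → c (e j) = true → i = j) ∧
      ((∑ i, (e i : M)) = 1 → ∃! i : Fin k, c (e i) = true))

namespace KSaux

abbrev M3 := Matrix (Fin 3) (Fin 3) ℤ

def E : Fin 50 → M3 := ![
  !![1,-1,0;0,0,0;1,-1,0],
  !![1,-1,0;0,0,0;0,0,0],
  !![1,-1,0;0,0,0;-1,1,0],
  !![0,0,0;-1,1,0;-1,1,0],
  !![0,0,0;-1,1,0;0,0,0],
  !![0,1,0;0,1,0;0,1,0],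
  !![0,-1,1;0,0,0;0,-1,1],
  !![1,0,-1;0,0,0;0,0,0],
  !![1,1,-1;1,1,-1;1,1,-1],
  !![1,0,-1;-1,0,1;0,0,0],
  !![0,0,0;-1,0,1;-1,0,1],
  !![0,0,0;0,0,0;-1,0,1],
  !![0,-1,1;0,1,-1;0,0,0],
  !![0,0,0;0,1,-1;0,0,0],
  !![0,0,0;0,0,0;0,-1,1],
  !![1,0,0;1,0,0;1,0,0],
  !![0,1,1;0,1,1;0,0,0],
  !![0,0,-1;0,0,-1;0,0,1],
  !![1,0,1;1,0,1;0,0,0],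
  !![-1,1,-1;-1,1,-1;1,-1,1],
  !![0,1,0;0,1,0;0,0,0],
  !![0,0,1;0,0,0;0,0,1],
  !![1,-1,-1;0,0,0;0,0,0],
  !![0,0,0;-1,1,1;0,0,0],
  !![0,0,0;0,0,0;-1,1,1],
  !![0,0,-1;0,0,1;0,0,1],
  !![0,0,0;0,0,-1;0,0,1],
  !![0,0,0;0,0,0;0,0,1],
  !![1,0,0;1,0,0;0,0,0],
  !![0,1,0;0,1,0;0,-1,0],
  !![0,1,1;0,0,0;0,1,1],
  !![1,-2,-1;0,0,0;0,0,0],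
  !![0,0,0;1,0,1;1,0,1],
  !![0,-1,0;0,1,0;0,-1,0],
  !![1,1,-1;0,0,0;0,0,0],
  !![0,0,0;0,1,0;0,1,0],
  !![0,0,0;0,1,0;0,0,0],
  !![0,0,0;0,1,0;0,-1,0],
  !![1,1,0;0,0,0;1,1,0],
  !![-1,-1,1;1,1,-1;-1,-1,1],
  !![0,0,0;0,0,0;-1,-1,1],
  !![1,0,0;0,0,0;1,0,0],
  !![1,1,0;0,0,0;0,0,0],
  !![1,0,0;0,0,0;0,0,0],
  !![0,0,0;1,1,0;1,1,0],
  !![0,0,0;1,1,0;0,0,0],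
  !![1,0,0;-1,0,0;1,0,0],
  !![0,0,0;2,1,-1;0,0,0],
  !![1,0,0;-1,0,0;0,0,0],
  !![1,0,0;-1,0,0;-1,0,0]]

lemma idemE : ∀ i, E i * E i = E i := by decide

lemma pairNotBoth {c : {e : M3 // e * e = e} → Bool} (hc : IsKSColoring c)
    (e0 e1 : {e : M3 // e * e = e}) (h01 : (e0 : M3) * e1 = 0) (h10 : (e1 : M3) * e0 = 0) :
    ¬(c e0 = true ∧ c e1 = true) := by
  rintro ⟨ha, hb⟩
  obtain ⟨h1, -⟩ := hc 2 ![e0, e1] (by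
    intro i j hij
    fin_cases i <;> fin_cases j <;>
      first
        | exact absurd rfl hij
        | simpa using h01
        | simpa using h10)
  exact absurd (h1 0 1 ha hb) (by decide)

lemma tripleAtLeast {c : {e : M3 // e * e = e} → Bool} (hc : IsKSColoring c)
    (e0 e1 e2 : {e : M3 // e * e = e})
    (h01 : (e0 : M3) * e1 = 0) (h10 : (e1 : M3) * e0 = 0)
    (h02 : (e0 : M3) * e2 = 0) (h20 : (e2 : M3) * e0 = 0)
    (h12 : (e1 : M3) * e2 = 0) (h21 : (e2 : M3) * e1 = 0)
    (hsum : (e0 : M3) + e1 + e2 = 1) :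
    c e0 = true ∨ c e1 = true ∨ c e2 = true := by
  obtain ⟨-, h⟩ := hc 3 ![e0, e1, e2] (by
    intro i j hij
    fin_cases i <;> fin_cases j <;>
      first
        | exact absurd rfl hij
        | simpa using h01
        | simpa using h10
        | simpa using h02
        | simpa using h20
        | simpa using h12
        | simpa using h21)
  obtain ⟨i, hi, -⟩ := h (by simpa [Fin.sum_univ_three] using hsum)
  fin_cases i
  · exact Or.inl hi
  · exact Or.inr (Or.inl hi)
  · exact Or.inr (Or.inr hi)

lemma unsat (b : Fin 50 → Bool)
    (t0 : b 15 = true ∨ b 3 = true ∨ b 14 = true)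
    (t1 : b 36 = true ∨ b 21 = true ∨ b 7 = true)
    (t2 : b 5 = true ∨ b 11 = true ∨ b 0 = true)
    (t3 : b 30 = true ∨ b 31 = true ∨ b 29 = true)
    (t4 : b 8 = true ∨ b 10 = true ∨ b 6 = true)
    (t5 : b 32 = true ∨ b 49 = true ∨ b 13 = true)
    (t6 : b 16 = true ∨ b 22 = true ∨ b 26 = true)
    (t7 : b 30 = true ∨ b 33 = true ∨ b 7 = true)
    (t8 : b 44 = true ∨ b 48 = true ∨ b 40 = true)
    (t9 : b 48 = true ∨ b 45 = true ∨ b 27 = true)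
    (t10 : b 28 = true ∨ b 26 = true ∨ b 23 = true)
    (t11 : b 38 = true ∨ b 39 = true ∨ b 9 = true)
    (t12 : b 24 = true ∨ b 37 = true ∨ b 41 = true)
    (t13 : b 18 = true ∨ b 17 = true ∨ b 4 = true)
    (t14 : b 18 = true ∨ b 19 = true ∨ b 2 = true)
    (t15 : b 6 = true ∨ b 34 = true ∨ b 35 = true)
    (t16 : b 43 = true ∨ b 36 = true ∨ b 27 = true)
    (t17 : b 1 = true ∨ b 20 = true ∨ b 27 = true)
    (t18 : b 42 = true ∨ b 12 = true ∨ b 25 = true)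
    (t19 : b 46 = true ∨ b 10 = true ∨ b 47 = true)
    (E0_8 : ¬(b 0 = true ∧ b 8 = true))
    (E0_20 : ¬(b 0 = true ∧ b 20 = true))
    (E0_24 : ¬(b 0 = true ∧ b 24 = true))
    (E0_29 : ¬(b 0 = true ∧ b 29 = true))
    (E0_40 : ¬(b 0 = true ∧ b 40 = true))
    (E1_5 : ¬(b 1 = true ∧ b 5 = true))
    (E1_14 : ¬(b 1 = true ∧ b 14 = true))
    (E1_16 : ¬(b 1 = true ∧ b 16 = true))
    (E1_17 : ¬(b 1 = true ∧ b 17 = true))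
    (E2_5 : ¬(b 2 = true ∧ b 5 = true))
    (E2_20 : ¬(b 2 = true ∧ b 20 = true))
    (E2_29 : ¬(b 2 = true ∧ b 29 = true))
    (E3_8 : ¬(b 3 = true ∧ b 8 = true))
    (E3_19 : ¬(b 3 = true ∧ b 19 = true))
    (E3_28 : ¬(b 3 = true ∧ b 28 = true))
    (E3_40 : ¬(b 3 = true ∧ b 40 = true))
    (E4_11 : ¬(b 4 = true ∧ b 11 = true))
    (E4_15 : ¬(b 4 = true ∧ b 15 = true))
    (E4_27 : ¬(b 4 = true ∧ b 27 = true))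
    (E5_6 : ¬(b 5 = true ∧ b 6 = true))
    (E5_7 : ¬(b 5 = true ∧ b 7 = true))
    (E5_14 : ¬(b 5 = true ∧ b 14 = true))
    (E6_7 : ¬(b 6 = true ∧ b 7 = true))
    (E6_10 : ¬(b 6 = true ∧ b 10 = true))
    (E6_22 : ¬(b 6 = true ∧ b 22 = true))
    (E6_31 : ¬(b 6 = true ∧ b 31 = true))
    (E7_13 : ¬(b 7 = true ∧ b 13 = true))
    (E7_21 : ¬(b 7 = true ∧ b 21 = true))
    (E7_30 : ¬(b 7 = true ∧ b 30 = true))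
    (E7_36 : ¬(b 7 = true ∧ b 36 = true))
    (E8_9 : ¬(b 8 = true ∧ b 9 = true))
    (E8_12 : ¬(b 8 = true ∧ b 12 = true))
    (E9_21 : ¬(b 9 = true ∧ b 21 = true))
    (E9_45 : ¬(b 9 = true ∧ b 45 = true))
    (E10_13 : ¬(b 10 = true ∧ b 13 = true))
    (E10_15 : ¬(b 10 = true ∧ b 15 = true))
    (E10_39 : ¬(b 10 = true ∧ b 39 = true))
    (E10_41 : ¬(b 10 = true ∧ b 41 = true))
    (E11_15 : ¬(b 11 = true ∧ b 15 = true))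
    (E11_33 : ¬(b 11 = true ∧ b 33 = true))
    (E11_36 : ¬(b 11 = true ∧ b 36 = true))
    (E11_38 : ¬(b 11 = true ∧ b 38 = true))
    (E12_34 : ¬(b 12 = true ∧ b 34 = true))
    (E12_44 : ¬(b 12 = true ∧ b 44 = true))
    (E13_15 : ¬(b 13 = true ∧ b 15 = true))
    (E13_25 : ¬(b 13 = true ∧ b 25 = true))
    (E14_35 : ¬(b 14 = true ∧ b 35 = true))
    (E14_42 : ¬(b 14 = true ∧ b 42 = true))
    (E14_43 : ¬(b 14 = true ∧ b 43 = true))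
    (E14_44 : ¬(b 14 = true ∧ b 44 = true))
    (E14_49 : ¬(b 14 = true ∧ b 49 = true))
    (E16_17 : ¬(b 16 = true ∧ b 17 = true))
    (E17_31 : ¬(b 17 = true ∧ b 31 = true))
    (E18_23 : ¬(b 18 = true ∧ b 23 = true))
    (E18_25 : ¬(b 18 = true ∧ b 25 = true))
    (E19_32 : ¬(b 19 = true ∧ b 32 = true))
    (E20_22 : ¬(b 20 = true ∧ b 22 = true))
    (E20_24 : ¬(b 20 = true ∧ b 24 = true))
    (E21_23 : ¬(b 21 = true ∧ b 23 = true))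
    (E21_34 : ¬(b 21 = true ∧ b 34 = true))
    (E21_36 : ¬(b 21 = true ∧ b 36 = true))
    (E22_30 : ¬(b 22 = true ∧ b 30 = true))
    (E22_37 : ¬(b 22 = true ∧ b 37 = true))
    (E24_38 : ¬(b 24 = true ∧ b 38 = true))
    (E25_45 : ¬(b 25 = true ∧ b 45 = true))
    (E26_43 : ¬(b 26 = true ∧ b 43 = true))
    (E26_48 : ¬(b 26 = true ∧ b 48 = true))
    (E27_36 : ¬(b 27 = true ∧ b 36 = true))
    (E27_42 : ¬(b 27 = true ∧ b 42 = true))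
    (E27_45 : ¬(b 27 = true ∧ b 45 = true))
    (E27_48 : ¬(b 27 = true ∧ b 48 = true))
    (E30_37 : ¬(b 30 = true ∧ b 37 = true))
    (E30_39 : ¬(b 30 = true ∧ b 39 = true))
    (E32_47 : ¬(b 32 = true ∧ b 47 = true))
    (E33_38 : ¬(b 33 = true ∧ b 38 = true))
    (E33_42 : ¬(b 33 = true ∧ b 42 = true))
    (E35_40 : ¬(b 35 = true ∧ b 40 = true))
    (E35_43 : ¬(b 35 = true ∧ b 43 = true))
    (E36_41 : ¬(b 36 = true ∧ b 41 = true))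
    (E37_43 : ¬(b 37 = true ∧ b 43 = true))
    (E39_44 : ¬(b 39 = true ∧ b 44 = true))
    (E44_46 : ¬(b 44 = true ∧ b 46 = true))
    (E44_48 : ¬(b 44 = true ∧ b 48 = true))
    (E44_49 : ¬(b 44 = true ∧ b 49 = true)) : False := by

  rcases t0 with h0 | h0 | h0
  ·
    rcases t2 with h1 | h1 | h1
    ·
      rcases t4 with h2 | h2 | h2
      ·
        rcases t1 with h3 | h3 | h3
        ·
          rcases t17 with h4 | h4 | h4
          · exact E1_5 ⟨h4, h1⟩
          ·
            rcases t12 with h5 | h5 | h5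
            · exact E20_24 ⟨h4, h5⟩
            ·
              rcases t7 with h6 | h6 | h6
              · exact E30_37 ⟨h6, h5⟩
              ·
                rcases t11 with h7 | h7 | h7
                · exact E33_38 ⟨h6, h7⟩
                ·
                  rcases t18 with h8 | h8 | h8
                  · exact E33_42 ⟨h6, h8⟩
                  · exact E8_12 ⟨h2, h8⟩
                  ·
                    rcases t9 with h9 | h9 | h9
                    ·
                      rcases t6 with h10 | h10 | h10
                      ·
                        rcases t13 with h11 | h11 | h11
                        · exact E18_25 ⟨h11, h8⟩
                        · exact E16_17 ⟨h10, h11⟩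
                        · exact E4_15 ⟨h11, h0⟩
                      · exact E20_22 ⟨h4, h10⟩
                      · exact E26_48 ⟨h10, h9⟩
                    · exact E25_45 ⟨h8, h9⟩
                    · exact E27_36 ⟨h9, h3⟩
                · exact E8_9 ⟨h2, h7⟩
              · exact E5_7 ⟨h1, h6⟩
            · exact E36_41 ⟨h3, h5⟩
          · exact E27_36 ⟨h4, h3⟩
        ·
          rcases t15 with h12 | h12 | h12
          · exact E5_6 ⟨h1, h12⟩
          · exact E21_34 ⟨h3, h12⟩
          ·
            rcases t16 with h13 | h13 | h13
            · exact E35_43 ⟨h12, h13⟩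
            · exact E21_36 ⟨h3, h13⟩
            ·
              rcases t8 with h14 | h14 | h14
              ·
                rcases t5 with h15 | h15 | h15
                ·
                  rcases t19 with h16 | h16 | h16
                  · exact E44_46 ⟨h14, h16⟩
                  · exact E10_15 ⟨h16, h0⟩
                  · exact E32_47 ⟨h15, h16⟩
                · exact E44_49 ⟨h14, h15⟩
                · exact E13_15 ⟨h15, h0⟩
              · exact E27_48 ⟨h13, h14⟩
              · exact E35_40 ⟨h12, h14⟩
        · exact E5_7 ⟨h1, h3⟩
      · exact E10_15 ⟨h2, h0⟩
      · exact E5_6 ⟨h1, h2⟩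
    · exact E11_15 ⟨h1, h0⟩
    ·
      rcases t4 with h17 | h17 | h17
      · exact E0_8 ⟨h1, h17⟩
      · exact E10_15 ⟨h17, h0⟩
      ·
        rcases t3 with h18 | h18 | h18
        ·
          rcases t12 with h19 | h19 | h19
          · exact E0_24 ⟨h1, h19⟩
          · exact E30_37 ⟨h18, h19⟩
          ·
            rcases t1 with h20 | h20 | h20
            · exact E36_41 ⟨h20, h19⟩
            ·
              rcases t11 with h21 | h21 | h21
              ·
                rcases t5 with h22 | h22 | h22
                ·
                  rcases t19 with h23 | h23 | h23
                  ·
                    rcases t8 with h24 | h24 | h24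
                    · exact E44_46 ⟨h24, h23⟩
                    ·
                      rcases t6 with h25 | h25 | h25
                      ·
                        rcases t17 with h26 | h26 | h26
                        · exact E1_16 ⟨h26, h25⟩
                        · exact E0_20 ⟨h1, h26⟩
                        · exact E27_48 ⟨h26, h24⟩
                      · exact E6_22 ⟨h17, h25⟩
                      · exact E26_48 ⟨h25, h24⟩
                    · exact E0_40 ⟨h1, h24⟩
                  · exact E10_15 ⟨h23, h0⟩
                  · exact E32_47 ⟨h22, h23⟩
                ·
                  rcases t8 with h27 | h27 | h27
                  · exact E44_49 ⟨h27, h22⟩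
                  ·
                    rcases t6 with h28 | h28 | h28
                    ·
                      rcases t17 with h29 | h29 | h29
                      · exact E1_16 ⟨h29, h28⟩
                      · exact E0_20 ⟨h1, h29⟩
                      · exact E27_48 ⟨h29, h27⟩
                    · exact E6_22 ⟨h17, h28⟩
                    · exact E26_48 ⟨h28, h27⟩
                  · exact E0_40 ⟨h1, h27⟩
                · exact E13_15 ⟨h22, h0⟩
              · exact E30_39 ⟨h18, h21⟩
              · exact E9_21 ⟨h21, h20⟩
            · exact E6_7 ⟨h17, h20⟩
        · exact E6_31 ⟨h17, h18⟩
        · exact E0_29 ⟨h1, h18⟩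
  ·
    rcases t4 with h30 | h30 | h30
    · exact E3_8 ⟨h0, h30⟩
    ·
      rcases t5 with h31 | h31 | h31
      ·
        rcases t8 with h32 | h32 | h32
        ·
          rcases t9 with h33 | h33 | h33
          · exact E44_48 ⟨h32, h33⟩
          ·
            rcases t11 with h34 | h34 | h34
            ·
              rcases t12 with h35 | h35 | h35
              · exact E24_38 ⟨h35, h34⟩
              ·
                rcases t7 with h36 | h36 | h36
                · exact E30_37 ⟨h36, h35⟩
                · exact E33_38 ⟨h36, h34⟩
                ·
                  rcases t16 with h37 | h37 | h37
                  · exact E37_43 ⟨h35, h37⟩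
                  · exact E7_36 ⟨h36, h37⟩
                  · exact E27_45 ⟨h37, h33⟩
              · exact E10_41 ⟨h30, h35⟩
            · exact E10_39 ⟨h30, h34⟩
            · exact E9_45 ⟨h34, h33⟩
          ·
            rcases t18 with h38 | h38 | h38
            · exact E27_42 ⟨h33, h38⟩
            · exact E12_44 ⟨h38, h32⟩
            ·
              rcases t13 with h39 | h39 | h39
              · exact E18_25 ⟨h39, h38⟩
              ·
                rcases t14 with h40 | h40 | h40
                · exact E18_25 ⟨h40, h38⟩
                · exact E3_19 ⟨h0, h40⟩
                ·
                  rcases t3 with h41 | h41 | h41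
                  ·
                    rcases t1 with h42 | h42 | h42
                    · exact E27_36 ⟨h33, h42⟩
                    ·
                      rcases t6 with h43 | h43 | h43
                      · exact E16_17 ⟨h43, h39⟩
                      · exact E22_30 ⟨h43, h41⟩
                      ·
                        rcases t11 with h44 | h44 | h44
                        ·
                          rcases t12 with h45 | h45 | h45
                          · exact E24_38 ⟨h45, h44⟩
                          · exact E30_37 ⟨h41, h45⟩
                          · exact E10_41 ⟨h30, h45⟩
                        · exact E10_39 ⟨h30, h44⟩
                        · exact E9_21 ⟨h44, h42⟩
                    · exact E7_30 ⟨h42, h41⟩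
                  · exact E17_31 ⟨h39, h41⟩
                  · exact E2_29 ⟨h40, h41⟩
              · exact E4_27 ⟨h39, h33⟩
        ·
          rcases t10 with h46 | h46 | h46
          · exact E3_28 ⟨h0, h46⟩
          · exact E26_48 ⟨h46, h32⟩
          ·
            rcases t14 with h47 | h47 | h47
            · exact E18_23 ⟨h47, h46⟩
            · exact E3_19 ⟨h0, h47⟩
            ·
              rcases t17 with h48 | h48 | h48
              ·
                rcases t6 with h49 | h49 | h49
                · exact E1_16 ⟨h48, h49⟩
                ·
                  rcases t3 with h50 | h50 | h50
                  · exact E22_30 ⟨h49, h50⟩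
                  ·
                    rcases t12 with h51 | h51 | h51
                    ·
                      rcases t2 with h52 | h52 | h52
                      · exact E2_5 ⟨h47, h52⟩
                      ·
                        rcases t13 with h53 | h53 | h53
                        · exact E18_23 ⟨h53, h46⟩
                        · exact E1_17 ⟨h48, h53⟩
                        · exact E4_11 ⟨h53, h52⟩
                      · exact E0_24 ⟨h52, h51⟩
                    · exact E22_37 ⟨h49, h51⟩
                    · exact E10_41 ⟨h30, h51⟩
                  · exact E2_29 ⟨h47, h50⟩
                · exact E26_48 ⟨h49, h32⟩
              · exact E2_20 ⟨h47, h48⟩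
              · exact E27_48 ⟨h48, h32⟩
        · exact E3_40 ⟨h0, h32⟩
      ·
        rcases t8 with h54 | h54 | h54
        · exact E44_49 ⟨h54, h31⟩
        ·
          rcases t10 with h55 | h55 | h55
          · exact E3_28 ⟨h0, h55⟩
          · exact E26_48 ⟨h55, h54⟩
          ·
            rcases t14 with h56 | h56 | h56
            · exact E18_23 ⟨h56, h55⟩
            · exact E3_19 ⟨h0, h56⟩
            ·
              rcases t17 with h57 | h57 | h57
              ·
                rcases t6 with h58 | h58 | h58
                · exact E1_16 ⟨h57, h58⟩
                ·
                  rcases t3 with h59 | h59 | h59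
                  · exact E22_30 ⟨h58, h59⟩
                  ·
                    rcases t12 with h60 | h60 | h60
                    ·
                      rcases t2 with h61 | h61 | h61
                      · exact E2_5 ⟨h56, h61⟩
                      ·
                        rcases t13 with h62 | h62 | h62
                        · exact E18_23 ⟨h62, h55⟩
                        · exact E1_17 ⟨h57, h62⟩
                        · exact E4_11 ⟨h62, h61⟩
                      · exact E0_24 ⟨h61, h60⟩
                    · exact E22_37 ⟨h58, h60⟩
                    · exact E10_41 ⟨h30, h60⟩
                  · exact E2_29 ⟨h56, h59⟩
                · exact E26_48 ⟨h58, h54⟩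
              · exact E2_20 ⟨h56, h57⟩
              · exact E27_48 ⟨h57, h54⟩
        · exact E3_40 ⟨h0, h54⟩
      · exact E10_13 ⟨h30, h31⟩
    ·
      rcases t1 with h63 | h63 | h63
      ·
        rcases t2 with h64 | h64 | h64
        · exact E5_6 ⟨h64, h30⟩
        · exact E11_36 ⟨h64, h63⟩
        ·
          rcases t3 with h65 | h65 | h65
          ·
            rcases t12 with h66 | h66 | h66
            · exact E0_24 ⟨h64, h66⟩
            · exact E30_37 ⟨h65, h66⟩
            · exact E36_41 ⟨h63, h66⟩
          · exact E6_31 ⟨h30, h65⟩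
          · exact E0_29 ⟨h64, h65⟩
      ·
        rcases t10 with h67 | h67 | h67
        · exact E3_28 ⟨h0, h67⟩
        ·
          rcases t8 with h68 | h68 | h68
          ·
            rcases t11 with h69 | h69 | h69
            ·
              rcases t2 with h70 | h70 | h70
              · exact E5_6 ⟨h70, h30⟩
              · exact E11_38 ⟨h70, h69⟩
              ·
                rcases t3 with h71 | h71 | h71
                ·
                  rcases t12 with h72 | h72 | h72
                  · exact E24_38 ⟨h72, h69⟩
                  · exact E30_37 ⟨h71, h72⟩
                  ·
                    rcases t16 with h73 | h73 | h73
                    · exact E26_43 ⟨h67, h73⟩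
                    · exact E21_36 ⟨h63, h73⟩
                    ·
                      rcases t18 with h74 | h74 | h74
                      · exact E27_42 ⟨h73, h74⟩
                      · exact E12_44 ⟨h74, h68⟩
                      ·
                        rcases t5 with h75 | h75 | h75
                        ·
                          rcases t19 with h76 | h76 | h76
                          · exact E44_46 ⟨h68, h76⟩
                          · exact E6_10 ⟨h30, h76⟩
                          · exact E32_47 ⟨h75, h76⟩
                        · exact E44_49 ⟨h68, h75⟩
                        · exact E13_25 ⟨h75, h74⟩
                · exact E6_31 ⟨h30, h71⟩
                · exact E0_29 ⟨h70, h71⟩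
            · exact E39_44 ⟨h69, h68⟩
            · exact E9_21 ⟨h69, h63⟩
          · exact E26_48 ⟨h67, h68⟩
          · exact E3_40 ⟨h0, h68⟩
        · exact E21_23 ⟨h63, h67⟩
      · exact E6_7 ⟨h30, h63⟩
  ·
    rcases t2 with h77 | h77 | h77
    · exact E5_14 ⟨h77, h0⟩
    ·
      rcases t16 with h78 | h78 | h78
      · exact E14_43 ⟨h0, h78⟩
      · exact E11_36 ⟨h77, h78⟩
      ·
        rcases t8 with h79 | h79 | h79
        · exact E14_44 ⟨h0, h79⟩
        · exact E27_48 ⟨h78, h79⟩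
        ·
          rcases t1 with h80 | h80 | h80
          · exact E11_36 ⟨h77, h80⟩
          ·
            rcases t7 with h81 | h81 | h81
            ·
              rcases t11 with h82 | h82 | h82
              · exact E11_38 ⟨h77, h82⟩
              · exact E30_39 ⟨h81, h82⟩
              · exact E9_21 ⟨h82, h80⟩
            · exact E11_33 ⟨h77, h81⟩
            · exact E7_21 ⟨h81, h80⟩
          ·
            rcases t5 with h83 | h83 | h83
            ·
              rcases t15 with h84 | h84 | h84
              · exact E6_7 ⟨h84, h80⟩
              ·
                rcases t18 with h85 | h85 | h85
                · exact E14_42 ⟨h0, h85⟩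
                · exact E12_34 ⟨h85, h84⟩
                ·
                  rcases t13 with h86 | h86 | h86
                  · exact E18_25 ⟨h86, h85⟩
                  ·
                    rcases t3 with h87 | h87 | h87
                    · exact E7_30 ⟨h80, h87⟩
                    · exact E17_31 ⟨h86, h87⟩
                    ·
                      rcases t14 with h88 | h88 | h88
                      · exact E18_25 ⟨h88, h85⟩
                      · exact E19_32 ⟨h88, h83⟩
                      · exact E2_29 ⟨h88, h87⟩
                  · exact E4_11 ⟨h86, h77⟩
              · exact E14_35 ⟨h0, h84⟩
            · exact E14_49 ⟨h0, h83⟩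
            · exact E7_13 ⟨h80, h83⟩
    ·
      rcases t8 with h89 | h89 | h89
      · exact E14_44 ⟨h0, h89⟩
      ·
        rcases t17 with h90 | h90 | h90
        · exact E1_14 ⟨h90, h0⟩
        · exact E0_20 ⟨h77, h90⟩
        · exact E27_48 ⟨h90, h89⟩
      · exact E0_40 ⟨h77, h89⟩


end KSaux

set_option maxHeartbeats 2000000 in
open KSaux in
/-- There is no Kochen–Specker coloring of the idempotents of `M₃(ℤ)`. -/
theorem no_KS_coloring_M3_int :
    ¬ ∃ c : {e : Matrix (Fin 3) (Fin 3) ℤ // e * e = e} → Bool, IsKSColoring c := by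
  rintro ⟨c, hc⟩
  refine unsat (fun i => c ⟨E i, idemE i⟩)

    (tripleAtLeast hc ⟨E 15, idemE 15⟩ ⟨E 3, idemE 3⟩ ⟨E 14, idemE 14⟩ (by decide) (by decide) (by decide) (by decide) (by decide) (by decide) (by decide))
    (tripleAtLeast hc ⟨E 36, idemE 36⟩ ⟨E 21, idemE 21⟩ ⟨E 7, idemE 7⟩ (by decide) (by decide) (by decide) (by decide) (by decide) (by decide) (by decide))
    (tripleAtLeast hc ⟨E 5, idemE 5⟩ ⟨E 11, idemE 11⟩ ⟨E 0, idemE 0⟩ (by decide) (by decide) (by decide) (by decide) (by decide) (by decide) (by decide))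
    (tripleAtLeast hc ⟨E 30, idemE 30⟩ ⟨E 31, idemE 31⟩ ⟨E 29, idemE 29⟩ (by decide) (by decide) (by decide) (by decide) (by decide) (by decide) (by decide))
    (tripleAtLeast hc ⟨E 8, idemE 8⟩ ⟨E 10, idemE 10⟩ ⟨E 6, idemE 6⟩ (by decide) (by decide) (by decide) (by decide) (by decide) (by decide) (by decide))
    (tripleAtLeast hc ⟨E 32, idemE 32⟩ ⟨E 49, idemE 49⟩ ⟨E 13, idemE 13⟩ (by decide) (by decide) (by decide) (by decide) (by decide) (by decide) (by decide))
    (tripleAtLeast hc ⟨E 16, idemE 16⟩ ⟨E 22, idemE 22⟩ ⟨E 26, idemE 26⟩ (by decide) (by decide) (by decide) (by decide) (by decide) (by decide) (by decide))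
    (tripleAtLeast hc ⟨E 30, idemE 30⟩ ⟨E 33, idemE 33⟩ ⟨E 7, idemE 7⟩ (by decide) (by decide) (by decide) (by decide) (by decide) (by decide) (by decide))
    (tripleAtLeast hc ⟨E 44, idemE 44⟩ ⟨E 48, idemE 48⟩ ⟨E 40, idemE 40⟩ (by decide) (by decide) (by decide) (by decide) (by decide) (by decide) (by decide))
    (tripleAtLeast hc ⟨E 48, idemE 48⟩ ⟨E 45, idemE 45⟩ ⟨E 27, idemE 27⟩ (by decide) (by decide) (by decide) (by decide) (by decide) (by decide) (by decide))
    (tripleAtLeast hc ⟨E 28, idemE 28⟩ ⟨E 26, idemE 26⟩ ⟨E 23, idemE 23⟩ (by decide) (by decide) (by decide) (by decide) (by decide) (by decide) (by decide))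
    (tripleAtLeast hc ⟨E 38, idemE 38⟩ ⟨E 39, idemE 39⟩ ⟨E 9, idemE 9⟩ (by decide) (by decide) (by decide) (by decide) (by decide) (by decide) (by decide))
    (tripleAtLeast hc ⟨E 24, idemE 24⟩ ⟨E 37, idemE 37⟩ ⟨E 41, idemE 41⟩ (by decide) (by decide) (by decide) (by decide) (by decide) (by decide) (by decide))
    (tripleAtLeast hc ⟨E 18, idemE 18⟩ ⟨E 17, idemE 17⟩ ⟨E 4, idemE 4⟩ (by decide) (by decide) (by decide) (by decide) (by decide) (by decide) (by decide))
    (tripleAtLeast hc ⟨E 18, idemE 18⟩ ⟨E 19, idemE 19⟩ ⟨E 2, idemE 2⟩ (by decide) (by decide) (by decide) (by decide) (by decide) (by decide) (by decide))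
    (tripleAtLeast hc ⟨E 6, idemE 6⟩ ⟨E 34, idemE 34⟩ ⟨E 35, idemE 35⟩ (by decide) (by decide) (by decide) (by decide) (by decide) (by decide) (by decide))
    (tripleAtLeast hc ⟨E 43, idemE 43⟩ ⟨E 36, idemE 36⟩ ⟨E 27, idemE 27⟩ (by decide) (by decide) (by decide) (by decide) (by decide) (by decide) (by decide))
    (tripleAtLeast hc ⟨E 1, idemE 1⟩ ⟨E 20, idemE 20⟩ ⟨E 27, idemE 27⟩ (by decide) (by decide) (by decide) (by decide) (by decide) (by decide) (by decide))
    (tripleAtLeast hc ⟨E 42, idemE 42⟩ ⟨E 12, idemE 12⟩ ⟨E 25, idemE 25⟩ (by decide) (by decide) (by decide) (by decide) (by decide) (by decide) (by decide))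
    (tripleAtLeast hc ⟨E 46, idemE 46⟩ ⟨E 10, idemE 10⟩ ⟨E 47, idemE 47⟩ (by decide) (by decide) (by decide) (by decide) (by decide) (by decide) (by decide))
    (pairNotBoth hc ⟨E 0, idemE 0⟩ ⟨E 8, idemE 8⟩ (by decide) (by decide))
    (pairNotBoth hc ⟨E 0, idemE 0⟩ ⟨E 20, idemE 20⟩ (by decide) (by decide))
    (pairNotBoth hc ⟨E 0, idemE 0⟩ ⟨E 24, idemE 24⟩ (by decide) (by decide))
    (pairNotBoth hc ⟨E 0, idemE 0⟩ ⟨E 29, idemE 29⟩ (by decide) (by decide))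
    (pairNotBoth hc ⟨E 0, idemE 0⟩ ⟨E 40, idemE 40⟩ (by decide) (by decide))
    (pairNotBoth hc ⟨E 1, idemE 1⟩ ⟨E 5, idemE 5⟩ (by decide) (by decide))
    (pairNotBoth hc ⟨E 1, idemE 1⟩ ⟨E 14, idemE 14⟩ (by decide) (by decide))
    (pairNotBoth hc ⟨E 1, idemE 1⟩ ⟨E 16, idemE 16⟩ (by decide) (by decide))
    (pairNotBoth hc ⟨E 1, idemE 1⟩ ⟨E 17, idemE 17⟩ (by decide) (by decide))
    (pairNotBoth hc ⟨E 2, idemE 2⟩ ⟨E 5, idemE 5⟩ (by decide) (by decide))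
    (pairNotBoth hc ⟨E 2, idemE 2⟩ ⟨E 20, idemE 20⟩ (by decide) (by decide))
    (pairNotBoth hc ⟨E 2, idemE 2⟩ ⟨E 29, idemE 29⟩ (by decide) (by decide))
    (pairNotBoth hc ⟨E 3, idemE 3⟩ ⟨E 8, idemE 8⟩ (by decide) (by decide))
    (pairNotBoth hc ⟨E 3, idemE 3⟩ ⟨E 19, idemE 19⟩ (by decide) (by decide))
    (pairNotBoth hc ⟨E 3, idemE 3⟩ ⟨E 28, idemE 28⟩ (by decide) (by decide))
    (pairNotBoth hc ⟨E 3, idemE 3⟩ ⟨E 40, idemE 40⟩ (by decide) (by decide))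
    (pairNotBoth hc ⟨E 4, idemE 4⟩ ⟨E 11, idemE 11⟩ (by decide) (by decide))
    (pairNotBoth hc ⟨E 4, idemE 4⟩ ⟨E 15, idemE 15⟩ (by decide) (by decide))
    (pairNotBoth hc ⟨E 4, idemE 4⟩ ⟨E 27, idemE 27⟩ (by decide) (by decide))
    (pairNotBoth hc ⟨E 5, idemE 5⟩ ⟨E 6, idemE 6⟩ (by decide) (by decide))
    (pairNotBoth hc ⟨E 5, idemE 5⟩ ⟨E 7, idemE 7⟩ (by decide) (by decide))
    (pairNotBoth hc ⟨E 5, idemE 5⟩ ⟨E 14, idemE 14⟩ (by decide) (by decide))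
    (pairNotBoth hc ⟨E 6, idemE 6⟩ ⟨E 7, idemE 7⟩ (by decide) (by decide))
    (pairNotBoth hc ⟨E 6, idemE 6⟩ ⟨E 10, idemE 10⟩ (by decide) (by decide))
    (pairNotBoth hc ⟨E 6, idemE 6⟩ ⟨E 22, idemE 22⟩ (by decide) (by decide))
    (pairNotBoth hc ⟨E 6, idemE 6⟩ ⟨E 31, idemE 31⟩ (by decide) (by decide))
    (pairNotBoth hc ⟨E 7, idemE 7⟩ ⟨E 13, idemE 13⟩ (by decide) (by decide))
    (pairNotBoth hc ⟨E 7, idemE 7⟩ ⟨E 21, idemE 21⟩ (by decide) (by decide))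
    (pairNotBoth hc ⟨E 7, idemE 7⟩ ⟨E 30, idemE 30⟩ (by decide) (by decide))
    (pairNotBoth hc ⟨E 7, idemE 7⟩ ⟨E 36, idemE 36⟩ (by decide) (by decide))
    (pairNotBoth hc ⟨E 8, idemE 8⟩ ⟨E 9, idemE 9⟩ (by decide) (by decide))
    (pairNotBoth hc ⟨E 8, idemE 8⟩ ⟨E 12, idemE 12⟩ (by decide) (by decide))
    (pairNotBoth hc ⟨E 9, idemE 9⟩ ⟨E 21, idemE 21⟩ (by decide) (by decide))
    (pairNotBoth hc ⟨E 9, idemE 9⟩ ⟨E 45, idemE 45⟩ (by decide) (by decide))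
    (pairNotBoth hc ⟨E 10, idemE 10⟩ ⟨E 13, idemE 13⟩ (by decide) (by decide))
    (pairNotBoth hc ⟨E 10, idemE 10⟩ ⟨E 15, idemE 15⟩ (by decide) (by decide))
    (pairNotBoth hc ⟨E 10, idemE 10⟩ ⟨E 39, idemE 39⟩ (by decide) (by decide))
    (pairNotBoth hc ⟨E 10, idemE 10⟩ ⟨E 41, idemE 41⟩ (by decide) (by decide))
    (pairNotBoth hc ⟨E 11, idemE 11⟩ ⟨E 15, idemE 15⟩ (by decide) (by decide))
    (pairNotBoth hc ⟨E 11, idemE 11⟩ ⟨E 33, idemE 33⟩ (by decide) (by decide))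
    (pairNotBoth hc ⟨E 11, idemE 11⟩ ⟨E 36, idemE 36⟩ (by decide) (by decide))
    (pairNotBoth hc ⟨E 11, idemE 11⟩ ⟨E 38, idemE 38⟩ (by decide) (by decide))
    (pairNotBoth hc ⟨E 12, idemE 12⟩ ⟨E 34, idemE 34⟩ (by decide) (by decide))
    (pairNotBoth hc ⟨E 12, idemE 12⟩ ⟨E 44, idemE 44⟩ (by decide) (by decide))
    (pairNotBoth hc ⟨E 13, idemE 13⟩ ⟨E 15, idemE 15⟩ (by decide) (by decide))
    (pairNotBoth hc ⟨E 13, idemE 13⟩ ⟨E 25, idemE 25⟩ (by decide) (by decide))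
    (pairNotBoth hc ⟨E 14, idemE 14⟩ ⟨E 35, idemE 35⟩ (by decide) (by decide))
    (pairNotBoth hc ⟨E 14, idemE 14⟩ ⟨E 42, idemE 42⟩ (by decide) (by decide))
    (pairNotBoth hc ⟨E 14, idemE 14⟩ ⟨E 43, idemE 43⟩ (by decide) (by decide))
    (pairNotBoth hc ⟨E 14, idemE 14⟩ ⟨E 44, idemE 44⟩ (by decide) (by decide))
    (pairNotBoth hc ⟨E 14, idemE 14⟩ ⟨E 49, idemE 49⟩ (by decide) (by decide))
    (pairNotBoth hc ⟨E 16, idemE 16⟩ ⟨E 17, idemE 17⟩ (by decide) (by decide))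
    (pairNotBoth hc ⟨E 17, idemE 17⟩ ⟨E 31, idemE 31⟩ (by decide) (by decide))
    (pairNotBoth hc ⟨E 18, idemE 18⟩ ⟨E 23, idemE 23⟩ (by decide) (by decide))
    (pairNotBoth hc ⟨E 18, idemE 18⟩ ⟨E 25, idemE 25⟩ (by decide) (by decide))
    (pairNotBoth hc ⟨E 19, idemE 19⟩ ⟨E 32, idemE 32⟩ (by decide) (by decide))
    (pairNotBoth hc ⟨E 20, idemE 20⟩ ⟨E 22, idemE 22⟩ (by decide) (by decide))
    (pairNotBoth hc ⟨E 20, idemE 20⟩ ⟨E 24, idemE 24⟩ (by decide) (by decide))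
    (pairNotBoth hc ⟨E 21, idemE 21⟩ ⟨E 23, idemE 23⟩ (by decide) (by decide))
    (pairNotBoth hc ⟨E 21, idemE 21⟩ ⟨E 34, idemE 34⟩ (by decide) (by decide))
    (pairNotBoth hc ⟨E 21, idemE 21⟩ ⟨E 36, idemE 36⟩ (by decide) (by decide))
    (pairNotBoth hc ⟨E 22, idemE 22⟩ ⟨E 30, idemE 30⟩ (by decide) (by decide))
    (pairNotBoth hc ⟨E 22, idemE 22⟩ ⟨E 37, idemE 37⟩ (by decide) (by decide))
    (pairNotBoth hc ⟨E 24, idemE 24⟩ ⟨E 38, idemE 38⟩ (by decide) (by decide))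
    (pairNotBoth hc ⟨E 25, idemE 25⟩ ⟨E 45, idemE 45⟩ (by decide) (by decide))
    (pairNotBoth hc ⟨E 26, idemE 26⟩ ⟨E 43, idemE 43⟩ (by decide) (by decide))
    (pairNotBoth hc ⟨E 26, idemE 26⟩ ⟨E 48, idemE 48⟩ (by decide) (by decide))
    (pairNotBoth hc ⟨E 27, idemE 27⟩ ⟨E 36, idemE 36⟩ (by decide) (by decide))
    (pairNotBoth hc ⟨E 27, idemE 27⟩ ⟨E 42, idemE 42⟩ (by decide) (by decide))
    (pairNotBoth hc ⟨E 27, idemE 27⟩ ⟨E 45, idemE 45⟩ (by decide) (by decide))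
    (pairNotBoth hc ⟨E 27, idemE 27⟩ ⟨E 48, idemE 48⟩ (by decide) (by decide))
    (pairNotBoth hc ⟨E 30, idemE 30⟩ ⟨E 37, idemE 37⟩ (by decide) (by decide))
    (pairNotBoth hc ⟨E 30, idemE 30⟩ ⟨E 39, idemE 39⟩ (by decide) (by decide))
    (pairNotBoth hc ⟨E 32, idemE 32⟩ ⟨E 47, idemE 47⟩ (by decide) (by decide))
    (pairNotBoth hc ⟨E 33, idemE 33⟩ ⟨E 38, idemE 38⟩ (by decide) (by decide))
    (pairNotBoth hc ⟨E 33, idemE 33⟩ ⟨E 42, idemE 42⟩ (by decide) (by decide))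
    (pairNotBoth hc ⟨E 35, idemE 35⟩ ⟨E 40, idemE 40⟩ (by decide) (by decide))
    (pairNotBoth hc ⟨E 35, idemE 35⟩ ⟨E 43, idemE 43⟩ (by decide) (by decide))
    (pairNotBoth hc ⟨E 36, idemE 36⟩ ⟨E 41, idemE 41⟩ (by decide) (by decide))
    (pairNotBoth hc ⟨E 37, idemE 37⟩ ⟨E 43, idemE 43⟩ (by decide) (by decide))
    (pairNotBoth hc ⟨E 39, idemE 39⟩ ⟨E 44, idemE 44⟩ (by decide) (by decide))
    (pairNotBoth hc ⟨E 44, idemE 44⟩ ⟨E 46, idemE 46⟩ (by decide) (by decide))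
    (pairNotBoth hc ⟨E 44, idemE 44⟩ ⟨E 48, idemE 48⟩ (by decide) (by decide))
    (pairNotBoth hc ⟨E 44, idemE 44⟩ ⟨E 49, idemE 49⟩ (by decide) (by decide))
end

section
/- For every ring R and every natural number n ≥ 3, there is no Kochen–Specker coloring of the idempotents of the matrix ring Mₙ(R) = Matrix (Fin n) (Fin n) R. -/
open Std.Sat

/-- A set of literals, stored as the bitmask with bit `2 * x + b.toNat` for the literal `(x, b)`:
bitwise operations keep the kernel evaluation of `DPLL.refutes` fast. -/
structure LiteralSet where
  bits : ℕ

namespace LiteralSet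

def empty : LiteralSet := ⟨0⟩

def contains (s : LiteralSet) (l : Literal ℕ) : Bool := s.bits.testBit (2 * l.1 + l.2.toNat)

def insert (s : LiteralSet) (l : Literal ℕ) : LiteralSet := ⟨s.bits ||| 2 ^ (2 * l.1 + l.2.toNat)⟩

def Holds (v : ℕ → Bool) (s : LiteralSet) : Prop := ∀ l, s.contains l = true → v l.1 = l.2

theorem holds_empty (v : ℕ → Bool) : empty.Holds v := by
  simp [Holds, contains, empty]

theorem contains_insert {s : LiteralSet} {l l' : Literal ℕ} :
    (s.insert l).contains l' = true ↔ l' = l ∨ s.contains l' = true := by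
  obtain ⟨x, b⟩ := l
  obtain ⟨x', b'⟩ := l'
  simp only [contains, insert, Nat.testBit_or, Nat.testBit_two_pow, Bool.or_eq_true,
    decide_eq_true_eq, Prod.mk.injEq]
  cases b <;> cases b' <;> simp only [Bool.toNat_false, Bool.toNat_true] <;> grind

variable {v : ℕ → Bool} {s : LiteralSet}

theorem Holds.insert {l : Literal ℕ} (hs : s.Holds v) (hl : v l.1 = l.2) :
    (s.insert l).Holds v := by
  intro l' hl'
  rcases contains_insert.1 hl' with rfl | hl'
  exacts [hl, hs l' hl']

theorem Holds.foldl_insert {ls : List (Literal ℕ)} (hs : s.Holds v)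
    (hls : ∀ l ∈ ls, v l.1 = l.2) : (ls.foldl LiteralSet.insert s).Holds v := by
  induction ls generalizing s with
  | nil => exact hs
  | cons l ls ih =>
    exact ih (hs.insert (hls l List.mem_cons_self)) fun l' hl' =>
      hls l' (List.mem_cons_of_mem _ hl')

end LiteralSet

namespace DPLL

def unfalsified (s : LiteralSet) (C : CNF.Clause ℕ) : CNF.Clause ℕ :=
  C.filter fun l => !s.contains l.negate

/-- `none` if `s` falsifies a clause, otherwise the unit literals not yet in `s`. -/
def forced (s : LiteralSet) : List (CNF.Clause ℕ) → Option (List (Literal ℕ))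
  | [] => some []
  | C :: cnf =>
    match unfalsified s C with
    | [] => none
    | [l] => if s.contains l then forced s cnf else (forced s cnf).map (l :: ·)
    | _ => forced s cnf

def branchLiteral (s : LiteralSet) (C : CNF.Clause ℕ) : Option (Literal ℕ) :=
  if C.any s.contains then none else (unfalsified s C).head?

def refutes (cnf : List (CNF.Clause ℕ)) : ℕ → LiteralSet → Bool
  | 0, _ => false
  | fuel + 1, s =>
    match forced s cnf with
    | none => true
    | some [] =>
      match cnf.findSome? (branchLiteral s) with
      | some l => refutes cnf fuel (s.insert l) && refutes cnf fuel (s.insert l.negate)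
      | none => false
    | some units => refutes cnf fuel (units.foldl LiteralSet.insert s)

variable {v : ℕ → Bool} {s : LiteralSet}

theorem exists_mem_unfalsified {C : CNF.Clause ℕ} (hC : C.eval v = true) (hs : s.Holds v) :
    ∃ l ∈ unfalsified s C, v l.1 = l.2 := by
  simp only [CNF.Clause.eval, List.any_eq_true, beq_iff_eq] at hC
  obtain ⟨l, hlC, hl⟩ := hC
  refine ⟨l, List.mem_filter.2 ⟨hlC, ?_⟩, hl⟩
  cases h : s.contains l.negate
  · rfl
  · simpa [Literal.negate, hl] using hs _ h

theorem forced_sound {cnf : List (CNF.Clause ℕ)} (hv : ∀ C ∈ cnf, C.eval v = true)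
    (hs : s.Holds v) : ∃ units, forced s cnf = some units ∧ ∀ l ∈ units, v l.1 = l.2 := by
  induction cnf with
  | nil => exact ⟨[], rfl, by simp⟩
  | cons C cnf ih =>
    obtain ⟨units, hunits, hholds⟩ := ih fun C' hC' => hv C' (List.mem_cons_of_mem _ hC')
    obtain ⟨l₀, hl₀, hvl₀⟩ := exists_mem_unfalsified (hv C List.mem_cons_self) hs
    simp only [forced]
    split
    next hnil => simp [hnil] at hl₀
    next l hl =>
      obtain rfl : l₀ = l := by simpa [hl] using hl₀
      split
      · exact ⟨units, hunits, hholds⟩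
      · exact ⟨l₀ :: units, by rw [hunits]; rfl, by simpa [hvl₀] using hholds⟩
    next => exact ⟨units, hunits, hholds⟩

theorem refutes_sound {cnf : List (CNF.Clause ℕ)} (hv : ∀ C ∈ cnf, C.eval v = true)
    {fuel : ℕ} (h : refutes cnf fuel s = true) (hs : s.Holds v) : False := by
  induction fuel generalizing s with
  | zero => simp [refutes] at h
  | succ fuel ih =>
    obtain ⟨units, hunits, hholds⟩ := forced_sound hv hs
    rw [refutes, hunits] at h
    rcases units with _ | ⟨u, us⟩
    · dsimp only at h
      split at h
      next l _ =>
        rw [Bool.and_eq_true] at h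
        by_cases hl : v l.1 = l.2
        · exact ih h.1 (hs.insert hl)
        · exact ih h.2 (hs.insert (by simpa [Literal.negate, Bool.eq_not_iff] using hl))
      next => simp at h
    · exact ih h (hs.foldl_insert hholds)

end DPLL

abbrev Idempotents (M : Type*) [Mul M] := {e : M // e * e = e}

def Idempotents.map {A B : Type*} [NonUnitalNonAssocSemiring A] [NonUnitalNonAssocSemiring B]
    (φ : A →ₙ+* B) (e : Idempotents A) : Idempotents B :=
  ⟨φ e, by rw [← map_mul, e.2]⟩

namespace NonUnitalRingHom

variable {A B : Type*} [Ring A] [Ring B] (φ : A →ₙ+* B)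

theorem isIdempotentElem_one_sub_map_one : IsIdempotentElem (1 - φ 1) :=
  IsIdempotentElem.one_sub (by rw [IsIdempotentElem, ← map_mul, one_mul])

theorem mul_one_sub_map_one (x : A) : φ x * (1 - φ 1) = 0 := by
  rw [mul_sub, mul_one, ← map_mul, mul_one, sub_self]

theorem one_sub_map_one_mul (x : A) : (1 - φ 1) * φ x = 0 := by
  rw [sub_mul, one_mul, ← map_mul, one_mul, sub_self]

end NonUnitalRingHom

namespace IsKSColoring

variable {M : Type*} [Ring M] {c : Idempotents M → Bool}

theorem not_and_of_mul_eq_zero (hc : IsKSColoring c) {e f : Idempotents M} (hef : (e : M) * f = 0)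
    (hfe : (f : M) * e = 0) : ¬(c e = true ∧ c f = true) := by
  rintro ⟨he, hf⟩
  have horth : ∀ i j : Fin 2, i ≠ j → (![e, f] i : M) * ![e, f] j = 0 := by
    intro i j hij
    fin_cases i <;> fin_cases j <;> simp_all
  exact absurd ((hc 2 ![e, f] horth).1 0 1 he hf) (by decide)

theorem exists_of_add_add_eq_one (hc : IsKSColoring c) {e f g : Idempotents M}
    (hef : (e : M) * f = 0) (hfe : (f : M) * e = 0) (heg : (e : M) * g = 0)
    (hge : (g : M) * e = 0) (hfg : (f : M) * g = 0) (hgf : (g : M) * f = 0)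
    (hsum : (e : M) + f + g = 1) : c e = true ∨ c f = true ∨ c g = true := by
  have horth : ∀ i j : Fin 3, i ≠ j → (![e, f, g] i : M) * ![e, f, g] j = 0 := by
    intro i j hij
    fin_cases i <;> fin_cases j <;> simp_all
  obtain ⟨i, hi, -⟩ := (hc 3 ![e, f, g] horth).2 (by simpa [Fin.sum_univ_three] using hsum)
  fin_cases i <;> simp_all

theorem exists_of_add_sum_eq_one (hc : IsKSColoring c) {k : ℕ} {q : Idempotents M}
    {e : Fin k → Idempotents M} (he : ∀ i j, i ≠ j → (e i : M) * e j = 0)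
    (hqe : ∀ i, (q : M) * e i = 0) (heq : ∀ i, (e i : M) * q = 0)
    (hsum : (q : M) + ∑ i, (e i : M) = 1) (hq : c q = false) : ∃ i, c (e i) = true := by
  let e' : Fin (k + 1) → Idempotents M := Fin.cons q e
  have horth : ∀ i j, i ≠ j → (e' i : M) * e' j = 0 := by
    intro i j hij
    cases i using Fin.cases <;> cases j using Fin.cases
    · exact absurd rfl hij
    · exact hqe _
    · exact heq _
    · exact he _ _ fun h => hij (congrArg _ h)
  obtain ⟨i, hi, -⟩ := (hc (k + 1) e' horth).2 (by simpa [e', Fin.sum_univ_succ] using hsum)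
  cases i using Fin.cases with
  | zero => simp [e', hq] at hi
  | succ i => exact ⟨i, by simpa [e'] using hi⟩

theorem exists_single_eq_true {R : Type*} [Ring R] {n : ℕ}
    {c : Idempotents (Matrix (Fin n) (Fin n) R) → Bool} (hc : IsKSColoring c) :
    ∃ j, c ⟨Matrix.single j j 1, by simp⟩ = true := by
  have horth : ∀ i j : Fin n, i ≠ j →
      (Matrix.single i i 1 : Matrix (Fin n) (Fin n) R) * Matrix.single j j 1 = 0 := by
    intro i j hij
    simp [Matrix.single_mul_single_of_ne _ _ _ _ hij]
  obtain ⟨j, hj, -⟩ :=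
    (hc n (fun j => ⟨Matrix.single j j 1, by simp⟩) horth).2 Matrix.sum_single_one
  exact ⟨j, hj⟩

theorem comp (hc : IsKSColoring c) {A : Type*} [Ring A] (φ : A →ₙ+* M) (x : Idempotents A)
    (hx : c (x.map φ) = true) : IsKSColoring (c ∘ Idempotents.map φ) := by
  intro k e he
  have he' : ∀ i j, i ≠ j → (Idempotents.map φ (e i) : M) * Idempotents.map φ (e j) = 0 := by
    intro i j hij
    simp [Idempotents.map, ← map_mul, he i j hij]
  obtain ⟨hmost, -⟩ := hc k (fun i => Idempotents.map φ (e i)) he'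
  refine ⟨hmost, fun hsum => ?_⟩
  let q : Idempotents M := ⟨1 - φ 1, φ.isIdempotentElem_one_sub_map_one⟩
  have hq : c q = false := by
    simpa [hx] using hc.not_and_of_mul_eq_zero (e := x.map φ) (f := q)
      (φ.mul_one_sub_map_one x) (φ.one_sub_map_one_mul x)
  obtain ⟨i, hi⟩ := hc.exists_of_add_sum_eq_one he' (fun _ => φ.one_sub_map_one_mul _)
    (fun _ => φ.mul_one_sub_map_one _)
    (by simp [q, Idempotents.map, ← map_sum, hsum]) hq
  exact ⟨i, hi, fun j hj => hmost j i hj hi⟩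

end IsKSColoring

namespace Matrix

section

variable (R : Type*) [NonUnitalNonAssocSemiring R] {m o n : Type*} [Fintype m] [Fintype o]
  [Fintype n]

def cornerHom (σ : m ⊕ o ≃ n) : Matrix m m R →ₙ+* Matrix n n R where
  toFun A := reindex σ σ (fromBlocks A 0 0 0)
  map_mul' A B := by simp [fromBlocks_multiply, submatrix_mul_equiv]
  map_zero' := by simp
  map_add' A B := by
    change _ = reindex σ σ (fromBlocks A 0 0 0 + fromBlocks B 0 0 0)
    simp only [fromBlocks_add, add_zero]

theorem cornerHom_apply (σ : m ⊕ o ≃ n) (A : Matrix m m R) :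
    cornerHom R σ A = reindex σ σ (fromBlocks A 0 0 0) :=
  rfl

theorem cornerHom_single [One R] [DecidableEq m] [DecidableEq o] [DecidableEq n]
    (σ : m ⊕ o ≃ n) (i : m) :
    cornerHom R σ (single i i 1) = single (σ (.inl i)) (σ (.inl i)) 1 := by
  have : fromBlocks (single i i (1 : R)) 0 0 (0 : Matrix o o R) = single (.inl i) (.inl i) 1 := by
    ext (a | a) (b | b) <;> simp [single_apply]
  rw [cornerHom_apply, this, reindex_apply, submatrix_single_equiv, Equiv.symm_symm]

end

theorem exists_nonUnitalRingHom_single_eq (R : Type*) [Ring R] {n : ℕ} (hn : 3 ≤ n)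
    (j : Fin n) : ∃ φ : Matrix (Fin 3) (Fin 3) ℤ →ₙ+* Matrix (Fin n) (Fin n) R,
      φ (single 0 0 1) = single j j 1 := by
  obtain ⟨m, rfl⟩ := Nat.exists_eq_add_of_le hn
  let σ : Fin 3 ⊕ Fin m ≃ Fin (3 + m) :=
    finSumFinEquiv.trans (Equiv.swap (finSumFinEquiv (.inl 0)) j)
  refine ⟨(cornerHom R σ).comp (Int.castRingHom R).mapMatrix.toNonUnitalRingHom, ?_⟩
  change cornerHom R σ ((single 0 0 1).map (Int.castRingHom R)) = _
  rw [map_single, map_one, cornerHom_single]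
  simp [σ]

end Matrix

namespace KochenSpecker

def matrices : List (Matrix (Fin 3) (Fin 3) ℤ) := [
  !![-1, 1, 1; -1, 1, 1; -1, 1, 1], !![0, -1, 1; 0, 0, 0; 0, -1, 1], !![0, 0, -1; 0, 0, 0; 0, 0, 1],
  !![0, 0, -1; 0, 0, 1; 0, 0, 1], !![0, 0, 0; -1, 0, -1; 1, 0, 1], !![0, 0, 0; -1, 1, -2; 0, 0, 0],
  !![0, 0, 0; -1, 1, 0; -1, 1, 0], !![0, 0, 0; -1, 1, 0; 0, 0, 0], !![0, 0, 0; -1, 1, 0; 1, -1, 0],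
  !![0, 0, 0; 0, 0, 0; -1, 0, 1], !![0, 0, 0; 0, 0, 0; -1, 1, 1], !![0, 0, 0; 0, 0, 0; 0, -1, 1],
  !![0, 0, 0; 0, 0, 0; 0, 1, 1], !![0, 0, 0; 0, 0, 0; 1, -1, 1], !![0, 0, 0; 0, 0, 0; 1, 0, 1],
  !![0, 0, 0; 0, 0, 0; 1, 1, 1], !![0, 0, 0; 0, 0, 1; 0, 0, 1], !![0, 0, 0; 0, 1, -1; 0, 0, 0],
  !![0, 0, 0; 0, 1, 0; 0, -1, 0], !![0, 0, 0; 0, 1, 0; 0, 0, 0], !![0, 0, 0; 0, 1, 0; 0, 1, 0],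
  !![0, 0, 0; 0, 1, 1; 0, 0, 0], !![0, 0, 1; 0, 0, 1; 0, 0, 1], !![0, 1, -1; 0, 1, -1; 0, 0, 0],
  !![0, 1, 0; 0, 1, 0; 0, -1, 0], !![0, 1, 0; 0, 1, 0; 0, 0, 0], !![0, 1, 0; 0, 1, 0; 0, 1, 0],
  !![1, -1, 0; 0, 0, 0; -1, 1, 0], !![1, -1, 0; 0, 0, 0; 0, 0, 0], !![1, -1, 0; 0, 0, 0; 1, -1, 0],
  !![1, -1, 1; 1, -1, 1; 1, -1, 1], !![1, 0, -1; 0, 0, 0; 0, 0, 0], !![1, 0, -1; 1, 0, -1; 0, 0, 0],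
  !![1, 0, 0; 0, 0, 0; -1, 0, 0], !![1, 0, 0; 0, 0, 0; 0, 0, 0], !![1, 0, 0; 0, 0, 0; 1, 0, 0],
  !![1, 0, 0; 1, 0, 0; -1, 0, 0], !![1, 0, 0; 1, 0, 0; 0, 0, 0], !![1, 0, 0; 1, 0, 0; 1, 0, 0],
  !![1, 0, 1; 0, 0, 0; 0, 0, 0], !![1, 0, 1; 1, 0, 1; 0, 0, 0]]

theorem matrices_mul_self : ∀ e ∈ matrices, e * e = e := by decide +kernel

def idempotent (i : ℕ) : Idempotents (Matrix (Fin 3) (Fin 3) ℤ) :=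
  ⟨matrices.getD i 0, by
    rcases lt_or_ge i matrices.length with h | h
    · rw [List.getD_eq_getElem _ _ h]
      exact matrices_mul_self _ (List.getElem_mem h)
    · rw [List.getD_eq_default _ _ h, mul_zero]⟩

def bases : List (ℕ × ℕ × ℕ) := [
  (15, 18, 33), (10, 25, 29), (6, 13, 37), (7, 9, 38), (0, 29, 32), (11, 20, 34),
  (3, 5, 40), (9, 19, 35), (22, 23, 28), (1, 26, 31), (8, 12, 36), (14, 24, 27),
  (16, 17, 34), (2, 19, 39), (4, 21, 36), (6, 23, 30)]

def orthogonalPairs : List (ℕ × ℕ) :=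
  bases.flatMap (fun (a, b, c) => [(a, b), (a, c), (b, c)]) ++ [
  (0, 1), (0, 23), (1, 20), (2, 25), (2, 40), (3, 23), (4, 33), (5, 32), (5, 37),
  (6, 11), (6, 36), (6, 38), (7, 14), (7, 22), (7, 40), (8, 10), (8, 15), (9, 26),
  (9, 29), (10, 35), (11, 38), (12, 28), (12, 34), (13, 20), (13, 27), (14, 36), (16, 23),
  (16, 37), (17, 38), (17, 39), (18, 34), (19, 31), (19, 34), (20, 35), (21, 34), (22, 31),
  (24, 28), (24, 29), (24, 39), (25, 28), (26, 29), (27, 30), (27, 40), (30, 32)]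

theorem orthogonalPairs_orthogonal : ∀ p ∈ orthogonalPairs,
    (idempotent p.1 : Matrix (Fin 3) (Fin 3) ℤ) * idempotent p.2 = 0 ∧
      (idempotent p.2 : Matrix (Fin 3) (Fin 3) ℤ) * idempotent p.1 = 0 := by
  decide +kernel

theorem bases_sum : ∀ t ∈ bases,
    (idempotent t.1 : Matrix (Fin 3) (Fin 3) ℤ) + idempotent t.2.1 + idempotent t.2.2 = 1 := by
  decide +kernel

def cnf : List (CNF.Clause ℕ) :=
  bases.map (fun (a, b, c) => [(a, true), (b, true), (c, true)]) ++
    orthogonalPairs.map (fun (a, b) => [(a, false), (b, false)])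

theorem cnf_satisfied {c : Idempotents (Matrix (Fin 3) (Fin 3) ℤ) → Bool} (hc : IsKSColoring c) :
    ∀ C ∈ cnf, C.eval (fun i => c (idempotent i)) = true := by
  intro C hC
  simp only [cnf, List.mem_append, List.mem_map] at hC
  rcases hC with ⟨⟨a, b, d⟩, ht, rfl⟩ | ⟨⟨a, b⟩, hp, rfl⟩
  · have orth : ∀ p ∈ [(a, b), (a, d), (b, d)], _ := fun p hp =>
      orthogonalPairs_orthogonal p (List.mem_append_left _ (List.mem_flatMap.2 ⟨_, ht, hp⟩))
    obtain ⟨hab, hba⟩ := orth (a, b) (by simp)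
    obtain ⟨had, hda⟩ := orth (a, d) (by simp)
    obtain ⟨hbd, hdb⟩ := orth (b, d) (by simp)
    simpa [CNF.Clause.eval] using
      hc.exists_of_add_add_eq_one hab hba had hda hbd hdb (bases_sum _ ht)
  · obtain ⟨hab, hba⟩ := orthogonalPairs_orthogonal _ hp
    simpa [CNF.Clause.eval, imp_iff_not_or] using hc.not_and_of_mul_eq_zero hab hba

theorem cnf_refuted : DPLL.refutes cnf 30 .empty = true := by decide +kernel

theorem not_isKSColoring_matrix_fin_three_int
    (c : Idempotents (Matrix (Fin 3) (Fin 3) ℤ) → Bool) : ¬IsKSColoring c := fun hc =>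
  DPLL.refutes_sound (cnf_satisfied hc) cnf_refuted (LiteralSet.holds_empty _)

end KochenSpecker

/-- For every ring `R` and every `n ≥ 3`, there is no Kochen–Specker coloring of the
idempotents of `Mₙ(R)`. -/
theorem no_KS_coloring_matrix_ring (R : Type*) [Ring R] (n : ℕ) (hn : 3 ≤ n) :
    ¬ ∃ c : {e : Matrix (Fin n) (Fin n) R // e * e = e} → Bool, IsKSColoring c := by
  rintro ⟨c, hc⟩
  obtain ⟨j, hj⟩ := hc.exists_single_eq_true
  obtain ⟨φ, hφ⟩ := Matrix.exists_nonUnitalRingHom_single_eq R hn j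
  refine KochenSpecker.not_isKSColoring_matrix_fin_three_int _
    (hc.comp φ ⟨Matrix.single 0 0 1, by simp⟩ ?_)
  simpa [Idempotents.map, hφ] using hj
end

section
/- For every ring R and every natural number n ≥ 3, the colimit in the category CommRingCat of commutative rings of the diagram of commutative subrings of Mₙ(R) — the functor from the poset (under inclusion) of subrings of Matrix (Fin n) (Fin n) R with commutative multiplication to CommRingCat, sending each such subring to itself as a commutative ring and each inclusion to the inclusion ring homomorphism — is the zero ring, i.e., its underlying type is a subsingleton. -/
open CategoryTheory

/-- The poset (under inclusion) of commutative subrings of a ring `M`. -/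
abbrev CommSubring (M : Type) [Ring M] := {C : Subring M // ∀ x y : C, x * y = y * x}

noncomputable instance (M : Type) [Ring M] (C : CommSubring M) : CommRing C.1 :=
  { (inferInstance : Ring C.1) with mul_comm := fun a b => C.2 a b }

/-- The diagram of commutative subrings of `M` in `CommRingCat`, sending each commutative
subring to itself as a commutative ring and each inclusion to the inclusion ring
homomorphism. -/
noncomputable def commSubringDiagram (M : Type) [Ring M] : CommSubring M ⥤ CommRingCat where
  obj C := CommRingCat.of C.1
  map {C D} h := CommRingCat.ofHom (Subring.inclusion (leOfHom h))
  map_id := by intros; rfl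
  map_comp := by intros; rfl

/-!
A cocone over the diagram yields a map `v` from `Mₙ(R)` to the cocone point that is a ring
homomorphism on every commutative subring, i.e. a unital map that is additive and multiplicative
on commuting pairs. If the colimit were nonzero, composing with a map onto a field would give such
a `v` with values in a field. On idempotents `v` then takes the values `0` and `1`, and `v e = 1`
is a Kochen–Specker colouring: it respects products of commuting idempotents and sums of
orthogonal ones. Since `1` is the sum of the diagonal matrix units, some `Eᵢᵢ` is coloured, and
the corner embedding `M₃(ℤ) → Mₙ(R)` sending `E₀₀` to `Eᵢᵢ` pulls the colouring back to `M₃(ℤ)`.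
There an explicit finite set of idempotent integer matrices admits no colouring with `E₀₀`
coloured.
-/

structure IsPartialCharacter {M K : Type*} [Semiring M] [Semiring K] (v : M → K) : Prop where
  map_one : v 1 = 1
  map_add {a b : M} : Commute a b → v (a + b) = v a + v b
  map_mul {a b : M} : Commute a b → v (a * b) = v a * v b

structure IsKochenSpeckerColoring {M : Type*} [Semiring M] (t : M → Prop) : Prop where
  one : t 1
  zero : ¬t 0
  mul_iff {a b c : M} : IsIdempotentElem a → IsIdempotentElem b → a * b = c → b * a = c →
    (t c ↔ t a ∧ t b)
  add_iff {a b c : M} : IsIdempotentElem a → IsIdempotentElem b → a * b = 0 → b * a = 0 →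
    a + b = c → (t c ↔ t a ∨ t b)

namespace IsPartialCharacter

variable {M M' K : Type*} [Semiring M] [Semiring M']

theorem comp_ringHom {L : Type*} [Semiring K] [Semiring L] {v : M → K}
    (hv : IsPartialCharacter v) (g : K →+* L) : IsPartialCharacter (g ∘ v) where
  map_one := by simp [hv.map_one]
  map_add h := by simp [hv.map_add h]
  map_mul h := by simp [hv.map_mul h]

theorem comp_nonUnitalRingHom [Semiring K] {v : M → K} (hv : IsPartialCharacter v)
    (f : M' →ₙ+* M) (h : v (f 1) = 1) : IsPartialCharacter (v ∘ f) where
  map_one := h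
  map_add hab := by simp [hv.map_add (hab.map f)]
  map_mul hab := by simp [hv.map_mul (hab.map f)]

variable [Ring K] {v : M → K}

theorem map_zero (hv : IsPartialCharacter v) : v 0 = 0 := by
  simpa using hv.map_add (Commute.zero_left 0)

theorem map_sum (hv : IsPartialCharacter v) {ι : Type*} (s : Finset ι) (f : ι → M)
    (hf : ∀ i ∈ s, ∀ j ∈ s, Commute (f i) (f j)) :
    v (∑ i ∈ s, f i) = ∑ i ∈ s, v (f i) := by
  classical
  induction s using Finset.induction_on with
  | empty => simp [hv.map_zero]
  | insert i s hi ih =>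
    have hcomm : Commute (f i) (∑ j ∈ s, f j) := Commute.sum_right _ _ _ fun j hj =>
      hf i (Finset.mem_insert_self i s) j (Finset.mem_insert_of_mem hj)
    rw [Finset.sum_insert hi, Finset.sum_insert hi, hv.map_add hcomm, ih fun j hj k hk =>
      hf j (Finset.mem_insert_of_mem hj) k (Finset.mem_insert_of_mem hk)]

variable [IsDomain K]

theorem map_eq_zero_or_eq_one (hv : IsPartialCharacter v) {e : M} (he : IsIdempotentElem e) :
    v e = 0 ∨ v e = 1 :=
  IsIdempotentElem.iff_eq_zero_or_one.1 <| by
    rw [IsIdempotentElem, ← hv.map_mul (Commute.refl e), he.eq]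

theorem isKochenSpeckerColoring (hv : IsPartialCharacter v) :
    IsKochenSpeckerColoring (fun e => v e = 1) where
  one := hv.map_one
  zero := by simp [hv.map_zero]
  mul_iff {a b c} ha hb hab hba := by
    rw [← hab, hv.map_mul (hab.trans hba.symm)]
    rcases hv.map_eq_zero_or_eq_one ha with h | h <;>
      rcases hv.map_eq_zero_or_eq_one hb with h' | h' <;> simp [h, h']
  add_iff {a b c} ha hb hab hba hc := by
    have hprod : v a * v b = 0 := by rw [← hv.map_mul (hab.trans hba.symm), hab, hv.map_zero]
    rw [← hc, hv.map_add (hab.trans hba.symm)]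
    rcases hv.map_eq_zero_or_eq_one ha with h | h <;>
      rcases hv.map_eq_zero_or_eq_one hb with h' | h' <;> simp_all

end IsPartialCharacter

def kochenSpeckerOrthogonalSums :
    List (Matrix (Fin 3) (Fin 3) ℤ × Matrix (Fin 3) (Fin 3) ℤ × Matrix (Fin 3) (Fin 3) ℤ) := [
  (!![1, 0, 0; 0, 0, 0; 0, 0, 0], !![0, 0, 0; 0, 1, 0; 0, 0, 0], !![1, 0, 0; 0, 1, 0; 0, 0, 0]),
  (!![1, 0, 0; 0, 0, 0; 0, 0, 0], !![0, 0, 0; 0, 0, 0; 0, 0, 1], !![1, 0, 0; 0, 0, 0; 0, 0, 1]),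
  (!![0, 0, 0; 0, 0, 0; 0, 0, 1], !![0, 0, 0; 1, 1, 0; 0, 0, 0], !![0, 0, 0; 1, 1, 0; 0, 0, 1]),
  (!![0, 0, 0; 0, 0, 0; 0, 1, 1], !![1, 0, 0; 0, 0, 0; 0, 0, 0], !![1, 0, 0; 0, 0, 0; 0, 1, 1]),
  (!![0, 0, 0; 0, 0, 0; 1, 0, 1], !![0, 0, 0; 0, 1, 0; 0, 0, 0], !![0, 0, 0; 0, 1, 0; 1, 0, 1]),
  (!![0, 0, 0; 0, 0, 1; 0, 0, 1], !![1, 0, 0; 0, 0, 0; 0, 0, 0], !![1, 0, 0; 0, 0, 1; 0, 0, 1]),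
  (!![0, 0, 0; 0, 1, -1; 0, 0, 0], !![1, 0, 0; 0, 0, 0; 0, 0, 0], !![1, 0, 0; 0, 1, -1; 0, 0, 0]),
  (!![0, 0, 0; 0, 1, 0; 0, 0, 0], !![0, 0, 1; 0, 0, 0; 0, 0, 1], !![0, 0, 1; 0, 1, 0; 0, 0, 1]),
  (!![0, 0, 0; 0, 1, 0; 0, 1, 0], !![1, 0, 0; 0, 0, 0; 0, 0, 0], !![1, 0, 0; 0, 1, 0; 0, 1, 0]),
  (!![0, -1, 0; 0, 1, 0; 0, -1, 0], !![0, 1, 1; 0, 0, 0; 0, 1, 1], !![0, 0, 1; 0, 1, 0; 0, 0, 1]),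
  (!![0, -1, 0; 0, 1, 0; 0, -1, 0], !![1, 1, 0; 0, 0, 0; 0, 1, 1], 1),
  (!![0, -1, 0; 0, 1, 0; 0, 1, 0], !![0, 1, -1; 0, 0, 0; 0, -1, 1], !![0, 0, -1; 0, 1, 0; 0, 0, 1]),
  (!![0, -1, 0; 0, 1, 0; 0, 1, 0], !![1, 1, 0; 0, 0, 0; -1, -1, 0], !![1, 0, 0; 0, 1, 0; -1, 0, 0]),
  (!![0, -1, 0; 0, 1, 0; 0, 1, 0], !![1, 1, 0; 0, 0, 0; 0, -1, 1], 1),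
  (!![0, -1, 1; 0, 1, -1; 0, 0, 0], !![0, 0, -1; 0, 0, 1; 0, 0, 1], !![0, -1, 0; 0, 1, 0; 0, 0, 1]),
  (!![0, -1, 1; 0, 1, -1; 0, 0, 0], !![1, 1, -1; 0, 0, 0; 0, 0, 0], !![1, 0, 0; 0, 1, -1; 0, 0, 0]),
  (!![0, -1, 1; 0, 1, 0; 0, 0, 1], !![1, 1, -1; 0, 0, 0; 0, 0, 0], 1),
  (!![0, 0, -1; 0, 0, 1; 0, 0, 1], !![1, 0, 1; 0, 1, -1; 0, 0, 0], 1),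
  (!![0, 0, 0; -1, 1, -1; 0, 0, 0], !![0, 0, 0; 1, 0, 1; 1, 0, 1], !![0, 0, 0; 0, 1, 0; 1, 0, 1]),
  (!![0, -1, 0; 0, 1, 0; 1, 1, 1], !![1, 1, 0; 0, 0, 0; -1, -1, 0], 1)
]

def kochenSpeckerCommutingProducts :
    List (Matrix (Fin 3) (Fin 3) ℤ × Matrix (Fin 3) (Fin 3) ℤ × Matrix (Fin 3) (Fin 3) ℤ) := [
  (!![0, -1, 0; 0, 1, 0; 0, 0, 1], !![1, 1, 0; 0, 0, 0; 0, 1, 1], !![0, 0, 0; 0, 0, 0; 0, 1, 1]),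
  (!![0, -1, 1; 0, 1, 0; 0, 0, 1], !![1, 1, 0; 0, 0, 0; 0, 0, 1], !![0, 0, 1; 0, 0, 0; 0, 0, 1]),
  (!![0, 0, -1; 0, 1, 0; 0, 0, 1], !![1, 0, 1; 0, 1, -1; 0, 0, 0], !![0, 0, 0; 0, 1, -1; 0, 0, 0]),
  (!![0, 0, 0; 1, 1, 0; 0, 0, 1], !![1, 0, 0; 0, 1, 0; 1, 1, 0], !![0, 0, 0; 1, 1, 0; 1, 1, 0]),
  (!![0, 0, 0; 1, 1, 0; 1, 0, 1], !![1, 0, 0; -1, 0, 0; 0, 0, 1], !![0, 0, 0; 0, 0, 0; 1, 0, 1]),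
  (!![0, 0, 0; 1, 1, 0; 1, 0, 1], !![1, 0, 0; 0, 0, 1; 0, 0, 1], !![0, 0, 0; 1, 0, 1; 1, 0, 1]),
  (!![0, 0, 0; 1, 1, 0; 1, 0, 1], !![1, 0, 0; 0, 1, 0; -1, 0, 0], !![0, 0, 0; 1, 1, 0; 0, 0, 0]),
  (!![0, 0, 0; 1, 1, 0; 1, 0, 1], !![1, 0, 0; 0, 1, 0; 0, 1, 0], !![0, 0, 0; 1, 1, 0; 1, 1, 0]),
  (!![0, -1, 0; 0, 1, 0; 1, 1, 1], !![1, 1, 0; 0, 0, 0; 0, -1, 1], !![0, 0, 0; 0, 0, 0; 1, 0, 1]),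
  (!![0, 0, -1; 1, 1, 1; 0, 0, 1], !![1, 0, 1; 0, 1, -1; 0, 0, 0], !![0, 0, 0; 1, 1, 0; 0, 0, 0]),
  (!![0, 0, -1; 1, 1, 1; 0, 0, 1], !![1, 1, 0; 0, 0, 0; -1, -1, 0], !![1, 1, 0; 0, 0, 0; -1, -1, 0])
]

theorem IsKochenSpeckerColoring.not_single_zero_zero {t : Matrix (Fin 3) (Fin 3) ℤ → Prop}
    (ht : IsKochenSpeckerColoring t) : ¬t (Matrix.single 0 0 1) := by
  have hsums : ∀ p ∈ kochenSpeckerOrthogonalSums,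
      (t p.2.2 ↔ t p.1 ∨ t p.2.1) ∧ ¬(t p.1 ∧ t p.2.1) := by
    intro p hp
    obtain ⟨ha, hb, hab, hba, hc⟩ : p.1 * p.1 = p.1 ∧ p.2.1 * p.2.1 = p.2.1 ∧ p.1 * p.2.1 = 0 ∧
        p.2.1 * p.1 = 0 ∧ p.1 + p.2.1 = p.2.2 := by
      revert p; decide
    exact ⟨ht.add_iff ha hb hab hba hc, fun h => ht.zero ((ht.mul_iff ha hb hab hba).2 h)⟩
  have hprods : ∀ p ∈ kochenSpeckerCommutingProducts, t p.2.2 ↔ t p.1 ∧ t p.2.1 := by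
    intro p hp
    obtain ⟨ha, hb, hab, hba⟩ : p.1 * p.1 = p.1 ∧ p.2.1 * p.2.1 = p.2.1 ∧ p.1 * p.2.1 = p.2.2 ∧
        p.2.1 * p.1 = p.2.2 := by
      revert p; decide
    exact ht.mul_iff ha hb hab hba
  simp only [kochenSpeckerOrthogonalSums, kochenSpeckerCommutingProducts, List.forall_mem_cons,
    List.not_mem_nil, IsEmpty.forall_iff, forall_const, and_true] at hsums hprods
  rw [show Matrix.single (0 : Fin 3) 0 (1 : ℤ) = !![1, 0, 0; 0, 0, 0; 0, 0, 0] by decide]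
  have := ht.one
  have := ht.zero
  -- After splitting on the colours of `E₁₀ + E₁₁` and `-E₀₁ + E₁₁ - E₂₁`, unit propagation
  -- from `t E₀₀` reaches a contradiction in each branch.
  grind

namespace Matrix

variable {ι κ R : Type*} [DecidableEq ι] [DecidableEq κ]

theorem submatrix_one_mul_submatrix_one [Fintype κ] [Semiring R] (p : ι ↪ κ) :
    (1 : Matrix κ κ R).submatrix p id * (1 : Matrix κ κ R).submatrix id p = 1 := by
  rw [← submatrix_mul _ _ _ _ _ Function.bijective_id, Matrix.mul_one, submatrix_one_embedding]

variable [Fintype ι]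

def cornerEmbedding [Fintype κ] [Semiring R] (p : ι ↪ κ) : Matrix ι ι R →ₙ+* Matrix κ κ R where
  toFun A := (1 : Matrix κ κ R).submatrix id p * A * (1 : Matrix κ κ R).submatrix p id
  map_mul' A B := by
    simp only [Matrix.mul_assoc, ← Matrix.mul_assoc _ (submatrix 1 id p),
      submatrix_one_mul_submatrix_one, Matrix.one_mul]
  map_zero' := by simp
  map_add' A B := by simp [Matrix.mul_add, Matrix.add_mul]

theorem cornerEmbedding_apply [Fintype κ] [Semiring R] (p : ι ↪ κ) (A : Matrix ι ι R) :
    cornerEmbedding p A =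
      (1 : Matrix κ κ R).submatrix id p * A * (1 : Matrix κ κ R).submatrix p id :=
  rfl

theorem cornerEmbedding_single [Fintype κ] [Semiring R] (p : ι ↪ κ) (i j : ι) (r : R) :
    cornerEmbedding p (single i j r) = single (p i) (p j) r := by
  rw [cornerEmbedding_apply]
  ext k l
  simp only [mul_apply, single_apply, submatrix_apply, one_apply, id]
  by_cases hk : k = p i <;> by_cases hl : l = p j <;>
    simp [hk, hl, eq_comm, Finset.sum_ite_eq, ite_and]
  exact (Finset.sum_eq_zero fun x _ => by aesop).symm

theorem _root_.IsPartialCharacter.exists_map_single_eq_one {K : Type*} [Semiring R] [Ring K]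
    [IsDomain K] {v : Matrix ι ι R → K} (hv : IsPartialCharacter v) :
    ∃ i, v (single i i 1) = 1 := by
  have hcomm (i j : ι) : Commute (single i i (1 : R)) (single j j 1) := by
    obtain rfl | hij := eq_or_ne i j
    · exact Commute.refl _
    · simp [Commute, SemiconjBy, hij, hij.symm]
  have hsum : ∑ i, v (single i i 1) = 1 := by
    rw [← hv.map_sum _ _ fun i _ j _ => hcomm i j, sum_single_one, hv.map_one]
  obtain ⟨i, -, hi⟩ := Finset.exists_ne_zero_of_sum_ne_zero (hsum ▸ one_ne_zero)
  exact ⟨i, (hv.map_eq_zero_or_eq_one (by simp [IsIdempotentElem])).resolve_left hi⟩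

theorem not_isPartialCharacter {K : Type*} [Ring R] [Ring K] [IsDomain K]
    (hι : 3 ≤ Fintype.card ι) (v : Matrix ι ι R → K) : ¬IsPartialCharacter v := by
  intro hv
  obtain ⟨i, hi⟩ := hv.exists_map_single_eq_one
  obtain ⟨e⟩ := Function.Embedding.nonempty_of_card_le (α := Fin 3) (β := ι) (by simpa using hι)
  let p : Fin 3 ↪ ι := e.trans (Equiv.swap (e 0) i).toEmbedding
  let f : Matrix (Fin 3) (Fin 3) ℤ →ₙ+* Matrix ι ι R :=
    (cornerEmbedding p).comp (Int.castRingHom R).mapMatrix.toNonUnitalRingHom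
  have hf : f (single 0 0 1) = single i i 1 := by
    change cornerEmbedding p ((single 0 0 (1 : ℤ)).map (Int.castRingHom R)) = _
    rw [map_single, cornerEmbedding_single]
    simp [p]
  have hf1 : v (f 1) = 1 := by
    have h := hv.map_mul ((Commute.one_left (single (0 : Fin 3) 0 (1 : ℤ))).map f)
    rwa [← map_mul, one_mul, hf, hi, mul_one, eq_comm] at h
  exact (hv.comp_nonUnitalRingHom f hf1).isKochenSpeckerColoring.not_single_zero_zero
    (by simpa [hf] using hi)

end Matrix

namespace CommSubring

variable {M : Type} [Ring M]

def closure (s : Set M) (hs : ∀ x ∈ s, ∀ y ∈ s, x * y = y * x) : CommSubring M :=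
  ⟨Subring.closure s, (Subring.isMulCommutative_closure hs).is_comm.comm⟩

theorem exists_mem_of_commute {a b : M} (h : Commute a b) :
    ∃ C : CommSubring M, a ∈ C.1 ∧ b ∈ C.1 :=
  ⟨closure {a, b} (by rintro x (rfl | rfl) y (rfl | rfl) <;> simp [h.eq]),
    Subring.subset_closure (by simp), Subring.subset_closure (by simp)⟩

noncomputable def coconeEval (c : Limits.Cocone (commSubringDiagram M)) (a : M) : c.pt :=
  (c.ι.app (closure {a} (by rintro x rfl y rfl; rfl))).hom ⟨a, Subring.subset_closure rfl⟩

theorem coconeEval_eq (c : Limits.Cocone (commSubringDiagram M)) (C : CommSubring M) {a : M}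
    (ha : a ∈ C.1) : coconeEval c a = (c.ι.app C).hom ⟨a, ha⟩ := by
  have h : closure {a} (by rintro x rfl y rfl; rfl) ≤ C :=
    Subring.closure_le.2 (by simpa using ha)
  rw [coconeEval, ← c.w (homOfLE h)]
  rfl

theorem isPartialCharacter_coconeEval (c : Limits.Cocone (commSubringDiagram M)) :
    IsPartialCharacter (coconeEval c) where
  map_one := map_one (c.ι.app _).hom
  map_add {a b} h := by
    obtain ⟨C, ha, hb⟩ := exists_mem_of_commute h
    rw [coconeEval_eq c C ha, coconeEval_eq c C hb, coconeEval_eq c C (add_mem ha hb)]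
    exact map_add (c.ι.app C).hom ⟨a, ha⟩ ⟨b, hb⟩
  map_mul {a b} h := by
    obtain ⟨C, ha, hb⟩ := exists_mem_of_commute h
    rw [coconeEval_eq c C ha, coconeEval_eq c C hb, coconeEval_eq c C (mul_mem ha hb)]
    exact map_mul (c.ι.app C).hom ⟨a, ha⟩ ⟨b, hb⟩

theorem subsingleton_colimit_of_forall_not_isPartialCharacter
    (h : ∀ (K : Type) [CommRing K] [IsDomain K] (v : M → K), ¬IsPartialCharacter v) :
    Subsingleton ↥(Limits.colimit (commSubringDiagram M)) := by
  rw [← not_nontrivial_iff_subsingleton]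
  intro
  obtain ⟨m, hm⟩ := Ideal.exists_maximal ↥(Limits.colimit (commSubringDiagram M))
  have := hm.isPrime
  exact h _ _ ((isPartialCharacter_coconeEval (Limits.colimit.cocone _)).comp_ringHom
    (Ideal.Quotient.mk m))

end CommSubring

/-- For every ring `R` and every `n ≥ 3`, the colimit in `CommRingCat` of the diagram of
commutative subrings of `Mₙ(R)` is the zero ring. -/
theorem colimit_commSubrings_matrix_subsingleton (R : Type) [Ring R] (n : ℕ) (hn : 3 ≤ n) :
    Subsingleton ↥(Limits.colimit (commSubringDiagram (Matrix (Fin n) (Fin n) R))) :=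
  CommSubring.subsingleton_colimit_of_forall_not_isPartialCharacter fun _ _ _ =>
    Matrix.not_isPartialCharacter (by simpa using hn)
end

section
/- Let R = ℤ[1/30] be the smallest subring of ℚ containing 1/30 (i.e., Subring.closure {(1/30 : ℚ)}). There is no Kochen–Specker coloring of the symmetric idempotents of the matrix ring M₃(R). -/
open Matrix

/-- A Kochen–Specker coloring of the symmetric idempotents of `M₃(R)`. -/
def IsSymKSColoring {R : Type*} [CommRing R]
    (c : {P : Matrix (Fin 3) (Fin 3) R // Pᵀ = P ∧ P * P = P} → Bool) : Prop :=
  ∀ (k : ℕ) (e : Fin k → {P : Matrix (Fin 3) (Fin 3) R // Pᵀ = P ∧ P * P = P}),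
    (∀ i j : Fin k, i ≠ j →
      (e i : Matrix (Fin 3) (Fin 3) R) * (e j : Matrix (Fin 3) (Fin 3) R) = 0) →
    ((∀ i j : Fin k, c (e i) = true → c (e j) = true → i = j) ∧
      ((∑ i, (e i : Matrix (Fin 3) (Fin 3) R)) = 1 → ∃! i : Fin k, c (e i) = true))

/-- A prime partial ideal of the partial ring `M₃(R)_sym` of symmetric matrices: a subset
of the set of symmetric matrices such that for every commutative subring `C` of `M₃(R)`
consisting of symmetric matrices, the corresponding subset of `C` is a prime ideal. -/
def IsSymPrimePartialIdeal {R : Type*} [CommRing R]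
    (p : Set (Matrix (Fin 3) (Fin 3) R)) : Prop :=
  (∀ A ∈ p, Aᵀ = A) ∧
  ∀ C : Subring (Matrix (Fin 3) (Fin 3) R), (∀ x y : C, x * y = y * x) →
    (∀ x : C, (x : Matrix (Fin 3) (Fin 3) R)ᵀ = (x : Matrix (Fin 3) (Fin 3) R)) →
    ∃ I : Ideal C, I.IsPrime ∧ ∀ x : C, x ∈ I ↔ (x : Matrix (Fin 3) (Fin 3) R) ∈ p

/-!
Over a commutative ring in which `30` is invertible, an integer vector `v` with `v ⬝ᵥ v ∣ 30`
spans the symmetric idempotent `v vᵀ / (v ⬝ᵥ v)`; orthogonal vectors give orthogonal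
idempotents and an orthogonal triad gives three idempotents summing to `1`. A Kochen–Specker
coloring therefore never colors two orthogonal vectors and colors some vector of every orthogonal
triad. The 33 vectors `ksVectors`, with entries in `{0, ±1, ±2}` and squared norms in
`{1, 2, 3, 5, 6}`, admit no such coloring.
-/

namespace Matrix

variable {n R : Type*} [Fintype n] [CommRing R]

/-- `Ring.inverse` is `0` off the units, so this is a projection only when `v ⬝ᵥ v` is a unit. -/
noncomputable def lineProj (v : n → R) : Matrix n n R := Ring.inverse (v ⬝ᵥ v) • vecMulVec v v

@[simp]
theorem transpose_lineProj (v : n → R) : (lineProj v)ᵀ = lineProj v := by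
  simp [lineProj]

theorem lineProj_mul_lineProj (u v : n → R) :
    lineProj u * lineProj v =
      (Ring.inverse (u ⬝ᵥ u) * Ring.inverse (v ⬝ᵥ v) * (u ⬝ᵥ v)) • vecMulVec u v := by
  rw [lineProj, lineProj, smul_mul_smul, vecMulVec_mul_vecMulVec, vecMulVec_smul, smul_smul]

theorem lineProj_mul_lineProj_of_dotProduct_eq_zero {u v : n → R} (h : u ⬝ᵥ v = 0) :
    lineProj u * lineProj v = 0 := by
  rw [lineProj_mul_lineProj, h, mul_zero, zero_smul]

theorem lineProj_mul_self {v : n → R} (h : IsUnit (v ⬝ᵥ v)) :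
    lineProj v * lineProj v = lineProj v := by
  rw [lineProj_mul_lineProj, mul_assoc, Ring.inverse_mul_cancel _ h, mul_one, lineProj]

/-- With `A` the matrix of rows `v i` and `D = diagonal (v i ⬝ᵥ v i)⁻¹`, orthogonality gives
`A * (Aᵀ * D) = 1`; square matrices over a commutative ring are Dedekind-finite, so
`Aᵀ * D * A = 1`, and this product is the sum of the projections. -/
theorem sum_lineProj_eq_one [DecidableEq n] {v : n → n → R}
    (horth : Pairwise fun i j => v i ⬝ᵥ v j = 0) (hunit : ∀ i, IsUnit (v i ⬝ᵥ v i)) :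
    ∑ i, lineProj (v i) = 1 := by
  set A : Matrix n n R := of v
  set D : Matrix n n R := diagonal fun i => Ring.inverse (v i ⬝ᵥ v i)
  have hAAt : A * Aᵀ = diagonal fun i => v i ⬝ᵥ v i := by
    ext i j
    rcases eq_or_ne i j with rfl | hij
    · simp [A, mul_apply, dotProduct]
    · simp [A, mul_apply, dotProduct, hij, ← horth hij]
  have hright : A * (Aᵀ * D) = 1 := by
    rw [← Matrix.mul_assoc, hAAt, diagonal_mul_diagonal, ← diagonal_one]
    exact congrArg diagonal (funext fun i => Ring.mul_inverse_cancel _ (hunit i))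
  calc ∑ i, lineProj (v i) = Aᵀ * D * A := by
        ext j k
        simp only [A, D, lineProj, sum_apply, smul_apply, vecMulVec_apply, mul_apply,
          transpose_apply, of_apply, smul_eq_mul, diagonal_apply, mul_ite, mul_zero,
          Finset.sum_ite_eq', Finset.mem_univ, if_true]
        exact Finset.sum_congr rfl fun i _ => by ring
    _ = 1 := mul_eq_one_comm.1 hright

theorem intCast_comp_dotProduct (u v : n → ℤ) :
    (Int.cast ∘ u : n → R) ⬝ᵥ (Int.cast ∘ v) = ((u ⬝ᵥ v : ℤ) : R) := by
  simpa using (RingHom.map_dotProduct (Int.castRingHom R) u v).symm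

end Matrix

section SymKSColoring

variable {R : Type*} [CommRing R]

abbrev SymIdem₃ (R : Type*) [CommRing R] :=
  {P : Matrix (Fin 3) (Fin 3) R // Pᵀ = P ∧ P * P = P}

noncomputable def lineProjSymIdem (v : Fin 3 → R) (hv : IsUnit (v ⬝ᵥ v)) : SymIdem₃ R :=
  ⟨lineProj v, transpose_lineProj v, lineProj_mul_self hv⟩

variable {c : SymIdem₃ R → Bool}

theorem IsSymKSColoring.eq_false_or_eq_false (hc : IsSymKSColoring c) {P Q : SymIdem₃ R}
    (hPQ : (P : Matrix (Fin 3) (Fin 3) R) * Q = 0)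
    (hQP : (Q : Matrix (Fin 3) (Fin 3) R) * P = 0) :
    c P = false ∨ c Q = false := by
  have hpair := (hc 2 ![P, Q] fun i j hij => by fin_cases i <;> fin_cases j <;> simp_all).1 0 1
  by_contra! h
  simp_all

theorem IsSymKSColoring.exists_eq_true (hc : IsSymKSColoring c) {k : ℕ}
    (e : Fin k → SymIdem₃ R)
    (horth : ∀ i j, i ≠ j → (e i : Matrix (Fin 3) (Fin 3) R) * e j = 0)
    (hsum : ∑ i, (e i : Matrix (Fin 3) (Fin 3) R) = 1) : ∃ i, c (e i) = true :=
  ((hc k e horth).2 hsum).exists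

end SymKSColoring

structure IsKSAssignment {ι : Type*} (v : ι → Fin 3 → ℤ) (x : ι → Bool) : Prop where
  eq_false_or_eq_false : ∀ i j, v i ⬝ᵥ v j = 0 → x i = false ∨ x j = false
  exists_eq_true : ∀ t : Fin 3 → ι, (Pairwise fun a b => v (t a) ⬝ᵥ v (t b) = 0) →
    ∃ a, x (t a) = true

theorem IsSymKSColoring.isKSAssignment {R : Type*} [CommRing R] {c : SymIdem₃ R → Bool}
    (hc : IsSymKSColoring c) {ι : Type*} (v : ι → Fin 3 → ℤ)
    (hv : ∀ i, IsUnit ((Int.cast ∘ v i : Fin 3 → R) ⬝ᵥ (Int.cast ∘ v i))) :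
    IsKSAssignment v fun i => c (lineProjSymIdem (Int.cast ∘ v i) (hv i)) where
  eq_false_or_eq_false i j h := by
    refine hc.eq_false_or_eq_false ?_ ?_ <;>
      exact lineProj_mul_lineProj_of_dotProduct_eq_zero
        (by simp [intCast_comp_dotProduct, dotProduct_comm, h])
  exists_eq_true t ht := by
    refine hc.exists_eq_true _ (fun a b hab => ?_) (sum_lineProj_eq_one (fun a b hab => ?_) ?_)
    · exact lineProj_mul_lineProj_of_dotProduct_eq_zero (by simp [intCast_comp_dotProduct, ht hab])
    · simp [intCast_comp_dotProduct, ht hab]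
    · exact fun a => hv (t a)

def ksVectors : Fin 33 → Fin 3 → ℤ :=
  ![![0, 0, 1], ![0, 1, -1], ![0, 1, 0], ![0, 1, 1], ![1, -2, -1], ![1, -2, 0], ![1, -2, 1],
    ![1, -1, -2], ![1, -1, -1], ![1, -1, 0], ![1, -1, 1], ![1, -1, 2], ![1, 0, -2], ![1, 0, -1],
    ![1, 0, 0], ![1, 0, 1], ![1, 0, 2], ![1, 1, -2], ![1, 1, -1], ![1, 1, 0], ![1, 1, 1],
    ![1, 1, 2], ![1, 2, -1], ![1, 2, 0], ![1, 2, 1], ![2, -1, -1], ![2, -1, 0], ![2, -1, 1],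
    ![2, 0, -1], ![2, 0, 1], ![2, 1, -1], ![2, 1, 0], ![2, 1, 1]]

theorem ksVectors_dotProduct_self_dvd : ∀ i, ksVectors i ⬝ᵥ ksVectors i ∣ 30 := by
  decide

def ksTriads : List (Fin 3 → Fin 33) :=
  [![0, 2, 14], ![0, 5, 31], ![0, 9, 19], ![0, 23, 26], ![1, 3, 14], ![1, 8, 32], ![1, 20, 25],
    ![2, 12, 29], ![2, 13, 15], ![2, 16, 28], ![3, 10, 30], ![3, 18, 27], ![4, 15, 18],
    ![6, 13, 20], ![7, 10, 19], ![8, 11, 19], ![8, 15, 22], ![9, 17, 20], ![9, 18, 21],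
    ![10, 13, 24]]

-- The pairs inside the triads, then the orthogonal pairs that lie in no triad.
def ksPairs : List (Fin 33 × Fin 33) :=
  ksTriads.flatMap (fun t => [(t 0, t 1), (t 0, t 2), (t 1, t 2)]) ++
    [(4, 31), (5, 30), (5, 32), (6, 31), (7, 29), (11, 28), (12, 27), (12, 32), (16, 25),
      (16, 30), (17, 29), (21, 28), (22, 26), (23, 25), (23, 27), (24, 26)]

theorem ksTriads_pairwise_orthogonal :
    ksTriads.all fun t => ∀ a b, a ≠ b → ksVectors (t a) ⬝ᵥ ksVectors (t b) = 0 := by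
  decide

theorem ksPairs_orthogonal : ksPairs.all fun p => ksVectors p.1 ⬝ᵥ ksVectors p.2 = 0 := by
  decide

theorem not_isKSAssignment_ksVectors (x : Fin 33 → Bool) : ¬ IsKSAssignment ksVectors x := by
  intro hx
  have htriad : ∀ t ∈ ksTriads, ∃ a, x (t a) = true := fun t ht =>
    hx.exists_eq_true t fun a b hab =>
      of_decide_eq_true (List.all_eq_true.1 ksTriads_pairwise_orthogonal t ht) a b hab
  have hpair : ∀ p ∈ ksPairs, x p.1 = false ∨ x p.2 = false := fun p hp =>
    hx.eq_false_or_eq_false _ _ (of_decide_eq_true (List.all_eq_true.1 ksPairs_orthogonal p hp))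
  simp only [ksPairs, ksTriads, List.flatMap_cons, List.flatMap_nil, List.cons_append,
    List.nil_append, List.forall_mem_cons, Fin.exists_fin_succ, Fin.exists_fin_zero, cons_val_zero,
    Fin.succ_zero_eq_one, cons_val_one, Fin.succ_one_eq_two, cons_val, or_false] at htriad hpair
  -- Exactly one coordinate axis is `true`; after one further split, unit propagation through
  -- the triads and pairs refutes every case.
  grind (splits := 40)

theorem not_exists_isSymKSColoring_of_isUnit_thirty {R : Type*} [CommRing R]
    (h30 : IsUnit (30 : R)) : ¬ ∃ c : SymIdem₃ R → Bool, IsSymKSColoring c := by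
  rintro ⟨c, hc⟩
  refine not_isKSAssignment_ksVectors _ (hc.isKSAssignment ksVectors fun i => ?_)
  rw [intCast_comp_dotProduct]
  exact isUnit_of_dvd_unit
    (by simpa using map_dvd (Int.castRingHom R) (ksVectors_dotProduct_self_dvd i)) h30

/-- There is no Kochen–Specker coloring of the symmetric idempotents of `M₃(ℤ[1/30])`,
where `ℤ[1/30]` is the smallest subring of `ℚ` containing `1/30`. -/
theorem no_sym_KS_coloring_M3_Zinv30 :
    ¬ ∃ c : {P : Matrix (Fin 3) (Fin 3) (Subring.closure {(1/30 : ℚ)}) //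
        Pᵀ = P ∧ P * P = P} → Bool, IsSymKSColoring c :=
  not_exists_isSymKSColoring_of_isUnit_thirty <|
    IsUnit.of_mul_eq_one ⟨1 / 30, Subring.subset_closure rfl⟩
      (Subtype.ext (show (30 : ℚ) * (1 / 30) = 1 by norm_num))
end

section
/- Let R = ℤ[1/30] be the smallest subring of ℚ containing 1/30 (i.e., Subring.closure {(1/30 : ℚ)}). The partial ring M₃(R)_sym of symmetric 3×3 matrices over R has no prime partial ideal. -/
open Matrix

-- ===== auxiliary machinery =====

section KSAux

abbrev Rng : Subring ℚ := Subring.closure {(1/30 : ℚ)}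

abbrev M3 (R : Type*) [CommRing R] := Matrix (Fin 3) (Fin 3) R

lemma ks_closure_comm {R : Type*} [CommRing R] (S : Set (M3 R))
    (hc : ∀ a ∈ S, ∀ b ∈ S, a * b = b * a) :
    ∀ x y : Subring.closure S, x * y = y * x := by
  have h1 : Subring.closure S ≤ Subring.centralizer S :=
    Subring.closure_le.2 fun a ha => Subring.mem_centralizer_iff.2 fun b hb => hc b hb a ha
  have h2 : Subring.closure S ≤ Subring.centralizer (Subring.closure S : Set (M3 R)) :=
    Subring.closure_le.2 fun a ha => Subring.mem_centralizer_iff.2 fun b hb =>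
      (Subring.mem_centralizer_iff.1 (h1 hb) a ha).symm
  intro x y
  exact Subtype.ext (Subring.mem_centralizer_iff.1 (h2 y.2) _ x.2)

lemma ks_closure_symm {R : Type*} [CommRing R] (S : Set (M3 R)) (hsym : ∀ a ∈ S, aᵀ = a)
    (hc : ∀ a ∈ S, ∀ b ∈ S, a * b = b * a) :
    ∀ x : Subring.closure S, (x : M3 R)ᵀ = (x : M3 R) := by
  have hcomm := ks_closure_comm S hc
  let T : Subring (M3 R) :=
    { carrier := {A | A ∈ Subring.closure S ∧ Aᵀ = A}
      one_mem' := ⟨one_mem _, Matrix.transpose_one⟩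
      zero_mem' := ⟨zero_mem _, Matrix.transpose_zero⟩
      add_mem' := fun ha hb => ⟨add_mem ha.1 hb.1, by rw [Matrix.transpose_add, ha.2, hb.2]⟩
      neg_mem' := fun ha => ⟨neg_mem ha.1, by rw [Matrix.transpose_neg, ha.2]⟩
      mul_mem' := by
        rintro a b ⟨ha, ha'⟩ ⟨hb, hb'⟩
        refine ⟨mul_mem ha hb, ?_⟩
        have := congrArg Subtype.val (hcomm ⟨b, hb⟩ ⟨a, ha⟩)
        rw [Matrix.transpose_mul, ha', hb']
        exact this }
  have hle : Subring.closure S ≤ T :=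
    Subring.closure_le.2 fun a ha => ⟨Subring.subset_closure ha, hsym a ha⟩
  exact fun x => (hle x.2).2

lemma ks_orth_symm {R : Type*} [CommRing R] {e f : M3 R} (he : eᵀ = e) (hf : fᵀ = f)
    (hef : e * f = 0) : f * e = 0 := by
  have h := Matrix.transpose_mul e f
  rw [hef, Matrix.transpose_zero, he, hf] at h
  exact h.symm

lemma ks_pair_mem {R : Type*} [CommRing R] {p : Set (M3 R)} (hp : IsSymPrimePartialIdeal p)
    {e f : M3 R} (he : eᵀ = e) (hf : fᵀ = f) (hef : e * f = 0) : e ∈ p ∨ f ∈ p := by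
  set S : Set (M3 R) := {e, f} with hS
  have hsym : ∀ a ∈ S, aᵀ = a := by rintro a (rfl | rfl) <;> assumption
  have hfe : f * e = 0 := ks_orth_symm he hf hef
  have hc : ∀ a ∈ S, ∀ b ∈ S, a * b = b * a := by
    rintro a (rfl | rfl) b (rfl | rfl) <;> simp [hef, hfe]
  obtain ⟨I, hIp, hI⟩ :=
    hp.2 (Subring.closure S) (ks_closure_comm S hc) (ks_closure_symm S hsym hc)
  have heS : e ∈ Subring.closure S := Subring.subset_closure (by simp [hS])
  have hfS : f ∈ Subring.closure S := Subring.subset_closure (by simp [hS])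
  have hmul : (⟨e, heS⟩ : Subring.closure S) * ⟨f, hfS⟩ ∈ I := by
    have h0 : (⟨e, heS⟩ : Subring.closure S) * ⟨f, hfS⟩ = 0 := Subtype.ext (by simpa using hef)
    rw [h0]; exact I.zero_mem
  rcases hIp.mem_or_mem hmul with h | h
  · exact Or.inl ((hI _).1 h)
  · exact Or.inr ((hI _).1 h)

lemma ks_triad_not_mem {R : Type*} [CommRing R] {p : Set (M3 R)}
    (hp : IsSymPrimePartialIdeal p) {e f g : M3 R}
    (he : eᵀ = e) (hf : fᵀ = f) (hg : gᵀ = g)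
    (hef : e * f = 0) (heg : e * g = 0) (hfg : f * g = 0)
    (hsum : e + f + g = 1) : e ∉ p ∨ f ∉ p ∨ g ∉ p := by
  by_contra hcon
  push_neg at hcon
  obtain ⟨hpe, hpf, hpg⟩ := hcon
  set S : Set (M3 R) := {e, f, g} with hS
  have hsym : ∀ a ∈ S, aᵀ = a := by rintro a (rfl | rfl | rfl) <;> assumption
  have hfe := ks_orth_symm he hf hef
  have hge := ks_orth_symm he hg heg
  have hgf := ks_orth_symm hf hg hfg
  have hc : ∀ a ∈ S, ∀ b ∈ S, a * b = b * a := by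
    rintro a (rfl | rfl | rfl) b (rfl | rfl | rfl) <;> simp [hef, hfe, heg, hge, hfg, hgf]
  obtain ⟨I, hIp, hI⟩ :=
    hp.2 (Subring.closure S) (ks_closure_comm S hc) (ks_closure_symm S hsym hc)
  have heS : e ∈ Subring.closure S := Subring.subset_closure (by simp [hS])
  have hfS : f ∈ Subring.closure S := Subring.subset_closure (by simp [hS])
  have hgS : g ∈ Subring.closure S := Subring.subset_closure (by simp [hS])
  have hone : (1 : Subring.closure S) ∈ I := by
    have h1 : (⟨e, heS⟩ : Subring.closure S) + ⟨f, hfS⟩ + ⟨g, hgS⟩ = 1 :=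
      Subtype.ext (by simpa using hsum)
    rw [← h1]
    exact I.add_mem (I.add_mem ((hI _).2 hpe) ((hI _).2 hpf)) ((hI _).2 hpg)
  exact hIp.ne_top (I.eq_top_iff_one.2 hone)

lemma ks_h30 : (1/30 : ℚ) ∈ Rng := Subring.subset_closure rfl

lemma ks_hint (z : ℤ) : (z : ℚ) ∈ Rng := intCast_mem Rng z

lemma ks_hinvmem (n : ℤ) (z : ℤ) (k : ℕ) (h : (n : ℚ) * (z * (1/30)^k) = 1) :
    (n : ℚ)⁻¹ ∈ Rng := by
  have hm : (z : ℚ) * (1/30)^k ∈ Rng := mul_mem (ks_hint z) (pow_mem ks_h30 k)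
  rw [inv_eq_of_mul_eq_one_right h]; exact hm

lemma vmv_transpose (a : ℚ) (v : Fin 3 → ℚ) :
    (a • vecMulVec v v)ᵀ = a • vecMulVec v v := by
  ext i j
  simp [vecMulVec_apply, transpose_apply, mul_comm]

lemma vmv_orth (a b : ℚ) (v w : Fin 3 → ℚ) (h : v ⬝ᵥ w = 0) :
    (a • vecMulVec v v) * (b • vecMulVec w w) = 0 := by
  rw [smul_mul_assoc, mul_smul_comm]
  have h2 : vecMulVec v v * vecMulVec w w = 0 := by
    ext i j
    simp only [Matrix.mul_apply, vecMulVec_apply, Matrix.zero_apply]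
    have e : ∑ k, v i * v k * (w k * w j) = (v i * w j) * ∑ k, v k * w k := by
      rw [Finset.mul_sum]; congr 1; ext k; ring
    rw [e]
    simp only [dotProduct] at h
    rw [h, mul_zero]
  rw [h2, smul_zero, smul_zero]

lemma vmv_mem (a : ℚ) (ha : a ∈ Rng) (v : Fin 3 → ℤ) (i j : Fin 3) :
    (a • vecMulVec (fun k => (v k : ℚ)) (fun k => (v k : ℚ))) i j ∈ Rng := by
  have h : (a • vecMulVec (fun k => (v k : ℚ)) (fun k => (v k : ℚ))) i j
      = a * ((v i : ℚ) * (v j : ℚ)) := rfl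
  rw [h]
  exact mul_mem ha (mul_mem (ks_hint _) (ks_hint _))

def ksLift (Q : Matrix (Fin 3) (Fin 3) ℚ) (h : ∀ a b, Q a b ∈ Rng) : M3 ↥Rng :=
  Matrix.of fun a b => ⟨Q a b, h a b⟩

lemma ks_map_inj :
    Function.Injective
      ((Rng.subtype).mapMatrix : Matrix (Fin 3) (Fin 3) ↥Rng →+* Matrix (Fin 3) (Fin 3) ℚ) := by
  intro A B h
  ext a b
  exact congrFun (congrFun h a) b

lemma ksLift_map (Q : Matrix (Fin 3) (Fin 3) ℚ) (h : ∀ a b, Q a b ∈ Rng) :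
    (Rng.subtype).mapMatrix (ksLift Q h) = Q := rfl

lemma lift_mul_zero (Q1 : Matrix (Fin 3) (Fin 3) ℚ) (h1 : ∀ a b, Q1 a b ∈ Rng)
    (Q2 : Matrix (Fin 3) (Fin 3) ℚ) (h2 : ∀ a b, Q2 a b ∈ Rng) (h : Q1 * Q2 = 0) :
    ksLift Q1 h1 * ksLift Q2 h2 = 0 :=
  ks_map_inj (by rw [_root_.map_mul, ksLift_map, ksLift_map, h, _root_.map_zero])

lemma lift_sum_one (Q1 : Matrix (Fin 3) (Fin 3) ℚ) (h1 : ∀ a b, Q1 a b ∈ Rng)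
    (Q2 : Matrix (Fin 3) (Fin 3) ℚ) (h2 : ∀ a b, Q2 a b ∈ Rng)
    (Q3 : Matrix (Fin 3) (Fin 3) ℚ) (h3 : ∀ a b, Q3 a b ∈ Rng) (h : Q1 + Q2 + Q3 = 1) :
    ksLift Q1 h1 + ksLift Q2 h2 + ksLift Q3 h3 = 1 :=
  ks_map_inj (by
    rw [_root_.map_add, _root_.map_add, ksLift_map, ksLift_map, ksLift_map, h, _root_.map_one])

lemma lift_transpose (Q : Matrix (Fin 3) (Fin 3) ℚ) (h : ∀ a b, Q a b ∈ Rng)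
    (hs : Qᵀ = Q) : (ksLift Q h)ᵀ = ksLift Q h := by
  ext a b
  exact congrFun (congrFun hs a) b

lemma dot_cast (u w : Fin 3 → ℤ) (h : u ⬝ᵥ w = 0) :
    (fun k => (u k : ℚ)) ⬝ᵥ (fun k => (w k : ℚ)) = 0 := by
  simp only [dotProduct, Fin.sum_univ_three] at h ⊢
  exact_mod_cast congrArg (Int.cast : ℤ → ℚ) h

noncomputable abbrev ψ : Matrix (Fin 3) (Fin 3) ℤ →+* Matrix (Fin 3) (Fin 3) ℚ :=
  (Int.castRingHom ℚ).mapMatrix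

lemma cast_vmv (u : Fin 3 → ℤ) :
    ψ (vecMulVec u u) = vecMulVec (fun k => (u k : ℚ)) (fun k => (u k : ℚ)) := by
  ext a b
  simp [Matrix.map_apply, vecMulVec_apply]

lemma triad_sum (n1 n2 n3 : ℤ) (u1 u2 u3 : Fin 3 → ℤ)
    (h1 : (n1 : ℚ) ≠ 0) (h2 : (n2 : ℚ) ≠ 0) (h3 : (n3 : ℚ) ≠ 0)
    (h : (n2 * n3) • vecMulVec u1 u1 + (n1 * n3) • vecMulVec u2 u2
        + (n1 * n2) • vecMulVec u3 u3 = (n1 * n2 * n3) • (1 : Matrix (Fin 3) (Fin 3) ℤ)) :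
    (n1 : ℚ)⁻¹ • vecMulVec (fun k => (u1 k : ℚ)) (fun k => (u1 k : ℚ))
      + (n2 : ℚ)⁻¹ • vecMulVec (fun k => (u2 k : ℚ)) (fun k => (u2 k : ℚ))
      + (n3 : ℚ)⁻¹ • vecMulVec (fun k => (u3 k : ℚ)) (fun k => (u3 k : ℚ)) = 1 := by
  have hc := congrArg (fun M => (((n1 : ℚ) * n2 * n3))⁻¹ • ψ M) h
  simp only [map_add, map_zsmul, _root_.map_one, cast_vmv,
    ← Int.cast_smul_eq_zsmul ℚ, Int.cast_mul, smul_add, smul_smul] at hc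
  rw [show ((n1:ℚ) * n2 * n3)⁻¹ * ((n2:ℚ) * n3) = (n1:ℚ)⁻¹ by field_simp <;> ring_nf,
      show ((n1:ℚ) * n2 * n3)⁻¹ * ((n1:ℚ) * n3) = (n2:ℚ)⁻¹ by field_simp <;> ring_nf,
      show ((n1:ℚ) * n2 * n3)⁻¹ * ((n1:ℚ) * n2) = (n3:ℚ)⁻¹ by field_simp <;> ring_nf,
      show ((n1:ℚ) * n2 * n3)⁻¹ * ((n1:ℚ) * n2 * n3) = 1 by field_simp <;> ring_nf,
      one_smul] at hc
  exact hc

lemma tr1 {P1 P2 P3 : Prop} (t : ¬P1 ∨ ¬P2 ∨ ¬P3) (h2 : P2) (h3 : P3) : ¬P1 :=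
  fun h1 => t.elim (fun h => h h1) (fun h => h.elim (fun h => h h2) (fun h => h h3))
lemma tr2 {P1 P2 P3 : Prop} (t : ¬P1 ∨ ¬P2 ∨ ¬P3) (h1 : P1) (h3 : P3) : ¬P2 :=
  fun h2 => t.elim (fun h => h h1) (fun h => h.elim (fun h => h h2) (fun h => h h3))
lemma tr3 {P1 P2 P3 : Prop} (t : ¬P1 ∨ ¬P2 ∨ ¬P3) (h1 : P1) (h2 : P2) : ¬P3 :=
  fun h3 => t.elim (fun h => h h1) (fun h => h.elim (fun h => h h2) (fun h => h h3))

def ksU : Fin 43 → Fin 3 → ℤ :=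
  ![![0, 0, 1],
    ![0, 1, -2],
    ![0, 1, -1],
    ![0, 1, 0],
    ![0, 1, 1],
    ![0, 1, 2],
    ![0, 2, -1],
    ![0, 2, 1],
    ![1, -2, -2],
    ![1, -2, -1],
    ![1, -2, 1],
    ![1, -2, 2],
    ![1, -1, -1],
    ![1, -1, 0],
    ![1, -1, 1],
    ![1, 0, -2],
    ![1, 0, -1],
    ![1, 0, 0],
    ![1, 0, 1],
    ![1, 0, 2],
    ![1, 1, -2],
    ![1, 1, -1],
    ![1, 1, 0],
    ![1, 1, 1],
    ![1, 1, 2],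
    ![1, 2, -2],
    ![1, 2, -1],
    ![1, 2, 1],
    ![1, 2, 2],
    ![2, -2, -1],
    ![2, -2, 1],
    ![2, -1, -2],
    ![2, -1, -1],
    ![2, -1, 1],
    ![2, -1, 2],
    ![2, 0, -1],
    ![2, 0, 1],
    ![2, 1, -2],
    ![2, 1, -1],
    ![2, 1, 1],
    ![2, 1, 2],
    ![2, 2, -1],
    ![2, 2, 1]]

abbrev ksv (i : Fin 43) : Fin 3 → ℚ := fun k => (ksU i k : ℚ)

def ksn : Fin 43 → ℤ :=
  ![1, 5, 2, 1, 2, 5, 5, 5, 9, 6, 6, 9, 3, 2, 3, 5, 2, 1, 2, 5, 6, 3, 2, 3, 6, 9, 6, 6, 9, 9, 9, 9, 6, 6, 9, 5, 5, 9, 6, 6, 9, 9, 9]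

abbrev ksQ (i : Fin 43) : Matrix (Fin 3) (Fin 3) ℚ := ((ksn i : ℤ) : ℚ)⁻¹ • vecMulVec (ksv i) (ksv i)

lemma ksn_inv_mem : ∀ i, ((ksn i : ℤ) : ℚ)⁻¹ ∈ Rng := by
  intro i; fin_cases i
  exacts [ks_hinvmem 1 1 0 (by norm_num),
    ks_hinvmem 5 6 1 (by norm_num),
    ks_hinvmem 2 15 1 (by norm_num),
    ks_hinvmem 1 1 0 (by norm_num),
    ks_hinvmem 2 15 1 (by norm_num),
    ks_hinvmem 5 6 1 (by norm_num),
    ks_hinvmem 5 6 1 (by norm_num),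
    ks_hinvmem 5 6 1 (by norm_num),
    ks_hinvmem 9 100 2 (by norm_num),
    ks_hinvmem 6 5 1 (by norm_num),
    ks_hinvmem 6 5 1 (by norm_num),
    ks_hinvmem 9 100 2 (by norm_num),
    ks_hinvmem 3 10 1 (by norm_num),
    ks_hinvmem 2 15 1 (by norm_num),
    ks_hinvmem 3 10 1 (by norm_num),
    ks_hinvmem 5 6 1 (by norm_num),
    ks_hinvmem 2 15 1 (by norm_num),
    ks_hinvmem 1 1 0 (by norm_num),
    ks_hinvmem 2 15 1 (by norm_num),
    ks_hinvmem 5 6 1 (by norm_num),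
    ks_hinvmem 6 5 1 (by norm_num),
    ks_hinvmem 3 10 1 (by norm_num),
    ks_hinvmem 2 15 1 (by norm_num),
    ks_hinvmem 3 10 1 (by norm_num),
    ks_hinvmem 6 5 1 (by norm_num),
    ks_hinvmem 9 100 2 (by norm_num),
    ks_hinvmem 6 5 1 (by norm_num),
    ks_hinvmem 6 5 1 (by norm_num),
    ks_hinvmem 9 100 2 (by norm_num),
    ks_hinvmem 9 100 2 (by norm_num),
    ks_hinvmem 9 100 2 (by norm_num),
    ks_hinvmem 9 100 2 (by norm_num),
    ks_hinvmem 6 5 1 (by norm_num),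
    ks_hinvmem 6 5 1 (by norm_num),
    ks_hinvmem 9 100 2 (by norm_num),
    ks_hinvmem 5 6 1 (by norm_num),
    ks_hinvmem 5 6 1 (by norm_num),
    ks_hinvmem 9 100 2 (by norm_num),
    ks_hinvmem 6 5 1 (by norm_num),
    ks_hinvmem 6 5 1 (by norm_num),
    ks_hinvmem 9 100 2 (by norm_num),
    ks_hinvmem 9 100 2 (by norm_num),
    ks_hinvmem 9 100 2 (by norm_num)]

lemma ksQ_mem (i : Fin 43) (a b : Fin 3) : ksQ i a b ∈ Rng :=
  vmv_mem _ (ksn_inv_mem i) (ksU i) a b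

noncomputable def ksP (i : Fin 43) : M3 ↥Rng := ksLift (ksQ i) (ksQ_mem i)

lemma ksP_symm (i : Fin 43) : (ksP i)ᵀ = ksP i :=
  lift_transpose _ _ (vmv_transpose _ (ksv i))

lemma kso0_3 : ksP 0 * ksP 3 = 0 :=
  lift_mul_zero _ _ _ _ (vmv_orth _ _ _ _ (dot_cast (ksU 0) (ksU 3) (by decide)))
lemma kso0_13 : ksP 0 * ksP 13 = 0 :=
  lift_mul_zero _ _ _ _ (vmv_orth _ _ _ _ (dot_cast (ksU 0) (ksU 13) (by decide)))
lemma kso0_17 : ksP 0 * ksP 17 = 0 :=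
  lift_mul_zero _ _ _ _ (vmv_orth _ _ _ _ (dot_cast (ksU 0) (ksU 17) (by decide)))
lemma kso0_22 : ksP 0 * ksP 22 = 0 :=
  lift_mul_zero _ _ _ _ (vmv_orth _ _ _ _ (dot_cast (ksU 0) (ksU 22) (by decide)))
lemma kso1_7 : ksP 1 * ksP 7 = 0 :=
  lift_mul_zero _ _ _ _ (vmv_orth _ _ _ _ (dot_cast (ksU 1) (ksU 7) (by decide)))
lemma kso1_9 : ksP 1 * ksP 9 = 0 :=
  lift_mul_zero _ _ _ _ (vmv_orth _ _ _ _ (dot_cast (ksU 1) (ksU 9) (by decide)))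
lemma kso1_17 : ksP 1 * ksP 17 = 0 :=
  lift_mul_zero _ _ _ _ (vmv_orth _ _ _ _ (dot_cast (ksU 1) (ksU 17) (by decide)))
lemma kso1_27 : ksP 1 * ksP 27 = 0 :=
  lift_mul_zero _ _ _ _ (vmv_orth _ _ _ _ (dot_cast (ksU 1) (ksU 27) (by decide)))
lemma kso2_4 : ksP 2 * ksP 4 = 0 :=
  lift_mul_zero _ _ _ _ (vmv_orth _ _ _ _ (dot_cast (ksU 2) (ksU 4) (by decide)))
lemma kso2_8 : ksP 2 * ksP 8 = 0 :=
  lift_mul_zero _ _ _ _ (vmv_orth _ _ _ _ (dot_cast (ksU 2) (ksU 8) (by decide)))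
lemma kso2_12 : ksP 2 * ksP 12 = 0 :=
  lift_mul_zero _ _ _ _ (vmv_orth _ _ _ _ (dot_cast (ksU 2) (ksU 12) (by decide)))
lemma kso2_17 : ksP 2 * ksP 17 = 0 :=
  lift_mul_zero _ _ _ _ (vmv_orth _ _ _ _ (dot_cast (ksU 2) (ksU 17) (by decide)))
lemma kso2_23 : ksP 2 * ksP 23 = 0 :=
  lift_mul_zero _ _ _ _ (vmv_orth _ _ _ _ (dot_cast (ksU 2) (ksU 23) (by decide)))
lemma kso2_28 : ksP 2 * ksP 28 = 0 :=
  lift_mul_zero _ _ _ _ (vmv_orth _ _ _ _ (dot_cast (ksU 2) (ksU 28) (by decide)))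
lemma kso2_32 : ksP 2 * ksP 32 = 0 :=
  lift_mul_zero _ _ _ _ (vmv_orth _ _ _ _ (dot_cast (ksU 2) (ksU 32) (by decide)))
lemma kso2_39 : ksP 2 * ksP 39 = 0 :=
  lift_mul_zero _ _ _ _ (vmv_orth _ _ _ _ (dot_cast (ksU 2) (ksU 39) (by decide)))
lemma kso3_15 : ksP 3 * ksP 15 = 0 :=
  lift_mul_zero _ _ _ _ (vmv_orth _ _ _ _ (dot_cast (ksU 3) (ksU 15) (by decide)))
lemma kso3_16 : ksP 3 * ksP 16 = 0 :=
  lift_mul_zero _ _ _ _ (vmv_orth _ _ _ _ (dot_cast (ksU 3) (ksU 16) (by decide)))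
lemma kso3_17 : ksP 3 * ksP 17 = 0 :=
  lift_mul_zero _ _ _ _ (vmv_orth _ _ _ _ (dot_cast (ksU 3) (ksU 17) (by decide)))
lemma kso3_18 : ksP 3 * ksP 18 = 0 :=
  lift_mul_zero _ _ _ _ (vmv_orth _ _ _ _ (dot_cast (ksU 3) (ksU 18) (by decide)))
lemma kso3_19 : ksP 3 * ksP 19 = 0 :=
  lift_mul_zero _ _ _ _ (vmv_orth _ _ _ _ (dot_cast (ksU 3) (ksU 19) (by decide)))
lemma kso3_35 : ksP 3 * ksP 35 = 0 :=
  lift_mul_zero _ _ _ _ (vmv_orth _ _ _ _ (dot_cast (ksU 3) (ksU 35) (by decide)))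
lemma kso3_36 : ksP 3 * ksP 36 = 0 :=
  lift_mul_zero _ _ _ _ (vmv_orth _ _ _ _ (dot_cast (ksU 3) (ksU 36) (by decide)))
lemma kso4_11 : ksP 4 * ksP 11 = 0 :=
  lift_mul_zero _ _ _ _ (vmv_orth _ _ _ _ (dot_cast (ksU 4) (ksU 11) (by decide)))
lemma kso4_14 : ksP 4 * ksP 14 = 0 :=
  lift_mul_zero _ _ _ _ (vmv_orth _ _ _ _ (dot_cast (ksU 4) (ksU 14) (by decide)))
lemma kso4_17 : ksP 4 * ksP 17 = 0 :=
  lift_mul_zero _ _ _ _ (vmv_orth _ _ _ _ (dot_cast (ksU 4) (ksU 17) (by decide)))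
lemma kso4_21 : ksP 4 * ksP 21 = 0 :=
  lift_mul_zero _ _ _ _ (vmv_orth _ _ _ _ (dot_cast (ksU 4) (ksU 21) (by decide)))
lemma kso4_33 : ksP 4 * ksP 33 = 0 :=
  lift_mul_zero _ _ _ _ (vmv_orth _ _ _ _ (dot_cast (ksU 4) (ksU 33) (by decide)))
lemma kso4_38 : ksP 4 * ksP 38 = 0 :=
  lift_mul_zero _ _ _ _ (vmv_orth _ _ _ _ (dot_cast (ksU 4) (ksU 38) (by decide)))
lemma kso5_6 : ksP 5 * ksP 6 = 0 :=
  lift_mul_zero _ _ _ _ (vmv_orth _ _ _ _ (dot_cast (ksU 5) (ksU 6) (by decide)))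
lemma kso5_10 : ksP 5 * ksP 10 = 0 :=
  lift_mul_zero _ _ _ _ (vmv_orth _ _ _ _ (dot_cast (ksU 5) (ksU 10) (by decide)))
lemma kso5_17 : ksP 5 * ksP 17 = 0 :=
  lift_mul_zero _ _ _ _ (vmv_orth _ _ _ _ (dot_cast (ksU 5) (ksU 17) (by decide)))
lemma kso5_26 : ksP 5 * ksP 26 = 0 :=
  lift_mul_zero _ _ _ _ (vmv_orth _ _ _ _ (dot_cast (ksU 5) (ksU 26) (by decide)))
lemma kso5_30 : ksP 5 * ksP 30 = 0 :=
  lift_mul_zero _ _ _ _ (vmv_orth _ _ _ _ (dot_cast (ksU 5) (ksU 30) (by decide)))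
lemma kso5_41 : ksP 5 * ksP 41 = 0 :=
  lift_mul_zero _ _ _ _ (vmv_orth _ _ _ _ (dot_cast (ksU 5) (ksU 41) (by decide)))
lemma kso6_17 : ksP 6 * ksP 17 = 0 :=
  lift_mul_zero _ _ _ _ (vmv_orth _ _ _ _ (dot_cast (ksU 6) (ksU 17) (by decide)))
lemma kso6_24 : ksP 6 * ksP 24 = 0 :=
  lift_mul_zero _ _ _ _ (vmv_orth _ _ _ _ (dot_cast (ksU 6) (ksU 24) (by decide)))
lemma kso6_31 : ksP 6 * ksP 31 = 0 :=
  lift_mul_zero _ _ _ _ (vmv_orth _ _ _ _ (dot_cast (ksU 6) (ksU 31) (by decide)))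
lemma kso6_40 : ksP 6 * ksP 40 = 0 :=
  lift_mul_zero _ _ _ _ (vmv_orth _ _ _ _ (dot_cast (ksU 6) (ksU 40) (by decide)))
lemma kso7_17 : ksP 7 * ksP 17 = 0 :=
  lift_mul_zero _ _ _ _ (vmv_orth _ _ _ _ (dot_cast (ksU 7) (ksU 17) (by decide)))
lemma kso7_34 : ksP 7 * ksP 34 = 0 :=
  lift_mul_zero _ _ _ _ (vmv_orth _ _ _ _ (dot_cast (ksU 7) (ksU 34) (by decide)))
lemma kso7_37 : ksP 7 * ksP 37 = 0 :=
  lift_mul_zero _ _ _ _ (vmv_orth _ _ _ _ (dot_cast (ksU 7) (ksU 37) (by decide)))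
lemma kso8_34 : ksP 8 * ksP 34 = 0 :=
  lift_mul_zero _ _ _ _ (vmv_orth _ _ _ _ (dot_cast (ksU 8) (ksU 34) (by decide)))
lemma kso8_36 : ksP 8 * ksP 36 = 0 :=
  lift_mul_zero _ _ _ _ (vmv_orth _ _ _ _ (dot_cast (ksU 8) (ksU 36) (by decide)))
lemma kso8_41 : ksP 8 * ksP 41 = 0 :=
  lift_mul_zero _ _ _ _ (vmv_orth _ _ _ _ (dot_cast (ksU 8) (ksU 41) (by decide)))
lemma kso9_18 : ksP 9 * ksP 18 = 0 :=
  lift_mul_zero _ _ _ _ (vmv_orth _ _ _ _ (dot_cast (ksU 9) (ksU 18) (by decide)))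
lemma kso9_21 : ksP 9 * ksP 21 = 0 :=
  lift_mul_zero _ _ _ _ (vmv_orth _ _ _ _ (dot_cast (ksU 9) (ksU 21) (by decide)))
lemma kso10_16 : ksP 10 * ksP 16 = 0 :=
  lift_mul_zero _ _ _ _ (vmv_orth _ _ _ _ (dot_cast (ksU 10) (ksU 16) (by decide)))
lemma kso10_23 : ksP 10 * ksP 23 = 0 :=
  lift_mul_zero _ _ _ _ (vmv_orth _ _ _ _ (dot_cast (ksU 10) (ksU 23) (by decide)))
lemma kso11_31 : ksP 11 * ksP 31 = 0 :=
  lift_mul_zero _ _ _ _ (vmv_orth _ _ _ _ (dot_cast (ksU 11) (ksU 31) (by decide)))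
lemma kso11_35 : ksP 11 * ksP 35 = 0 :=
  lift_mul_zero _ _ _ _ (vmv_orth _ _ _ _ (dot_cast (ksU 11) (ksU 35) (by decide)))
lemma kso11_42 : ksP 11 * ksP 42 = 0 :=
  lift_mul_zero _ _ _ _ (vmv_orth _ _ _ _ (dot_cast (ksU 11) (ksU 42) (by decide)))
lemma kso12_18 : ksP 12 * ksP 18 = 0 :=
  lift_mul_zero _ _ _ _ (vmv_orth _ _ _ _ (dot_cast (ksU 12) (ksU 18) (by decide)))
lemma kso12_22 : ksP 12 * ksP 22 = 0 :=
  lift_mul_zero _ _ _ _ (vmv_orth _ _ _ _ (dot_cast (ksU 12) (ksU 22) (by decide)))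
lemma kso12_26 : ksP 12 * ksP 26 = 0 :=
  lift_mul_zero _ _ _ _ (vmv_orth _ _ _ _ (dot_cast (ksU 12) (ksU 26) (by decide)))
lemma kso12_39 : ksP 12 * ksP 39 = 0 :=
  lift_mul_zero _ _ _ _ (vmv_orth _ _ _ _ (dot_cast (ksU 12) (ksU 39) (by decide)))
lemma kso13_20 : ksP 13 * ksP 20 = 0 :=
  lift_mul_zero _ _ _ _ (vmv_orth _ _ _ _ (dot_cast (ksU 13) (ksU 20) (by decide)))
lemma kso13_21 : ksP 13 * ksP 21 = 0 :=
  lift_mul_zero _ _ _ _ (vmv_orth _ _ _ _ (dot_cast (ksU 13) (ksU 21) (by decide)))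
lemma kso13_22 : ksP 13 * ksP 22 = 0 :=
  lift_mul_zero _ _ _ _ (vmv_orth _ _ _ _ (dot_cast (ksU 13) (ksU 22) (by decide)))
lemma kso13_23 : ksP 13 * ksP 23 = 0 :=
  lift_mul_zero _ _ _ _ (vmv_orth _ _ _ _ (dot_cast (ksU 13) (ksU 23) (by decide)))
lemma kso13_24 : ksP 13 * ksP 24 = 0 :=
  lift_mul_zero _ _ _ _ (vmv_orth _ _ _ _ (dot_cast (ksU 13) (ksU 24) (by decide)))
lemma kso13_41 : ksP 13 * ksP 41 = 0 :=
  lift_mul_zero _ _ _ _ (vmv_orth _ _ _ _ (dot_cast (ksU 13) (ksU 41) (by decide)))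
lemma kso13_42 : ksP 13 * ksP 42 = 0 :=
  lift_mul_zero _ _ _ _ (vmv_orth _ _ _ _ (dot_cast (ksU 13) (ksU 42) (by decide)))
lemma kso14_16 : ksP 14 * ksP 16 = 0 :=
  lift_mul_zero _ _ _ _ (vmv_orth _ _ _ _ (dot_cast (ksU 14) (ksU 16) (by decide)))
lemma kso14_22 : ksP 14 * ksP 22 = 0 :=
  lift_mul_zero _ _ _ _ (vmv_orth _ _ _ _ (dot_cast (ksU 14) (ksU 22) (by decide)))
lemma kso14_27 : ksP 14 * ksP 27 = 0 :=
  lift_mul_zero _ _ _ _ (vmv_orth _ _ _ _ (dot_cast (ksU 14) (ksU 27) (by decide)))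
lemma kso14_38 : ksP 14 * ksP 38 = 0 :=
  lift_mul_zero _ _ _ _ (vmv_orth _ _ _ _ (dot_cast (ksU 14) (ksU 38) (by decide)))
lemma kso15_33 : ksP 15 * ksP 33 = 0 :=
  lift_mul_zero _ _ _ _ (vmv_orth _ _ _ _ (dot_cast (ksU 15) (ksU 33) (by decide)))
lemma kso15_36 : ksP 15 * ksP 36 = 0 :=
  lift_mul_zero _ _ _ _ (vmv_orth _ _ _ _ (dot_cast (ksU 15) (ksU 36) (by decide)))
lemma kso15_39 : ksP 15 * ksP 39 = 0 :=
  lift_mul_zero _ _ _ _ (vmv_orth _ _ _ _ (dot_cast (ksU 15) (ksU 39) (by decide)))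
lemma kso15_42 : ksP 15 * ksP 42 = 0 :=
  lift_mul_zero _ _ _ _ (vmv_orth _ _ _ _ (dot_cast (ksU 15) (ksU 42) (by decide)))
lemma kso16_18 : ksP 16 * ksP 18 = 0 :=
  lift_mul_zero _ _ _ _ (vmv_orth _ _ _ _ (dot_cast (ksU 16) (ksU 18) (by decide)))
lemma kso16_23 : ksP 16 * ksP 23 = 0 :=
  lift_mul_zero _ _ _ _ (vmv_orth _ _ _ _ (dot_cast (ksU 16) (ksU 23) (by decide)))
lemma kso16_27 : ksP 16 * ksP 27 = 0 :=
  lift_mul_zero _ _ _ _ (vmv_orth _ _ _ _ (dot_cast (ksU 16) (ksU 27) (by decide)))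
lemma kso16_34 : ksP 16 * ksP 34 = 0 :=
  lift_mul_zero _ _ _ _ (vmv_orth _ _ _ _ (dot_cast (ksU 16) (ksU 34) (by decide)))
lemma kso18_21 : ksP 18 * ksP 21 = 0 :=
  lift_mul_zero _ _ _ _ (vmv_orth _ _ _ _ (dot_cast (ksU 18) (ksU 21) (by decide)))
lemma kso18_26 : ksP 18 * ksP 26 = 0 :=
  lift_mul_zero _ _ _ _ (vmv_orth _ _ _ _ (dot_cast (ksU 18) (ksU 26) (by decide)))
lemma kso18_31 : ksP 18 * ksP 31 = 0 :=
  lift_mul_zero _ _ _ _ (vmv_orth _ _ _ _ (dot_cast (ksU 18) (ksU 31) (by decide)))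
lemma kso18_37 : ksP 18 * ksP 37 = 0 :=
  lift_mul_zero _ _ _ _ (vmv_orth _ _ _ _ (dot_cast (ksU 18) (ksU 37) (by decide)))
lemma kso19_29 : ksP 19 * ksP 29 = 0 :=
  lift_mul_zero _ _ _ _ (vmv_orth _ _ _ _ (dot_cast (ksU 19) (ksU 29) (by decide)))
lemma kso19_32 : ksP 19 * ksP 32 = 0 :=
  lift_mul_zero _ _ _ _ (vmv_orth _ _ _ _ (dot_cast (ksU 19) (ksU 32) (by decide)))
lemma kso19_35 : ksP 19 * ksP 35 = 0 :=
  lift_mul_zero _ _ _ _ (vmv_orth _ _ _ _ (dot_cast (ksU 19) (ksU 35) (by decide)))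
lemma kso19_38 : ksP 19 * ksP 38 = 0 :=
  lift_mul_zero _ _ _ _ (vmv_orth _ _ _ _ (dot_cast (ksU 19) (ksU 38) (by decide)))
lemma kso19_41 : ksP 19 * ksP 41 = 0 :=
  lift_mul_zero _ _ _ _ (vmv_orth _ _ _ _ (dot_cast (ksU 19) (ksU 41) (by decide)))
lemma kso20_23 : ksP 20 * ksP 23 = 0 :=
  lift_mul_zero _ _ _ _ (vmv_orth _ _ _ _ (dot_cast (ksU 20) (ksU 23) (by decide)))
lemma kso20_36 : ksP 20 * ksP 36 = 0 :=
  lift_mul_zero _ _ _ _ (vmv_orth _ _ _ _ (dot_cast (ksU 20) (ksU 36) (by decide)))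
lemma kso21_24 : ksP 21 * ksP 24 = 0 :=
  lift_mul_zero _ _ _ _ (vmv_orth _ _ _ _ (dot_cast (ksU 21) (ksU 24) (by decide)))
lemma kso21_33 : ksP 21 * ksP 33 = 0 :=
  lift_mul_zero _ _ _ _ (vmv_orth _ _ _ _ (dot_cast (ksU 21) (ksU 33) (by decide)))
lemma kso22_30 : ksP 22 * ksP 30 = 0 :=
  lift_mul_zero _ _ _ _ (vmv_orth _ _ _ _ (dot_cast (ksU 22) (ksU 30) (by decide)))
lemma kso23_32 : ksP 23 * ksP 32 = 0 :=
  lift_mul_zero _ _ _ _ (vmv_orth _ _ _ _ (dot_cast (ksU 23) (ksU 32) (by decide)))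
lemma kso25_29 : ksP 25 * ksP 29 = 0 :=
  lift_mul_zero _ _ _ _ (vmv_orth _ _ _ _ (dot_cast (ksU 25) (ksU 29) (by decide)))
lemma kso25_36 : ksP 25 * ksP 36 = 0 :=
  lift_mul_zero _ _ _ _ (vmv_orth _ _ _ _ (dot_cast (ksU 25) (ksU 36) (by decide)))
lemma kso25_40 : ksP 25 * ksP 40 = 0 :=
  lift_mul_zero _ _ _ _ (vmv_orth _ _ _ _ (dot_cast (ksU 25) (ksU 40) (by decide)))
lemma kso28_30 : ksP 28 * ksP 30 = 0 :=
  lift_mul_zero _ _ _ _ (vmv_orth _ _ _ _ (dot_cast (ksU 28) (ksU 30) (by decide)))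
lemma kso28_35 : ksP 28 * ksP 35 = 0 :=
  lift_mul_zero _ _ _ _ (vmv_orth _ _ _ _ (dot_cast (ksU 28) (ksU 35) (by decide)))
lemma kso28_37 : ksP 28 * ksP 37 = 0 :=
  lift_mul_zero _ _ _ _ (vmv_orth _ _ _ _ (dot_cast (ksU 28) (ksU 37) (by decide)))
lemma kso29_40 : ksP 29 * ksP 40 = 0 :=
  lift_mul_zero _ _ _ _ (vmv_orth _ _ _ _ (dot_cast (ksU 29) (ksU 40) (by decide)))
lemma kso30_37 : ksP 30 * ksP 37 = 0 :=
  lift_mul_zero _ _ _ _ (vmv_orth _ _ _ _ (dot_cast (ksU 30) (ksU 37) (by decide)))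
lemma kso31_42 : ksP 31 * ksP 42 = 0 :=
  lift_mul_zero _ _ _ _ (vmv_orth _ _ _ _ (dot_cast (ksU 31) (ksU 42) (by decide)))
lemma kso34_41 : ksP 34 * ksP 41 = 0 :=
  lift_mul_zero _ _ _ _ (vmv_orth _ _ _ _ (dot_cast (ksU 34) (ksU 41) (by decide)))

lemma kss0_13_22 : ksP 0 + ksP 13 + ksP 22 = 1 :=
  lift_sum_one _ _ _ _ _ _ (triad_sum 1 2 2 (ksU 0) (ksU 13) (ksU 22)
    (by norm_num) (by norm_num) (by norm_num) (by decide))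
lemma kss1_7_17 : ksP 1 + ksP 7 + ksP 17 = 1 :=
  lift_sum_one _ _ _ _ _ _ (triad_sum 5 5 1 (ksU 1) (ksU 7) (ksU 17)
    (by norm_num) (by norm_num) (by norm_num) (by decide))
lemma kss2_4_17 : ksP 2 + ksP 4 + ksP 17 = 1 :=
  lift_sum_one _ _ _ _ _ _ (triad_sum 2 2 1 (ksU 2) (ksU 4) (ksU 17)
    (by norm_num) (by norm_num) (by norm_num) (by decide))
lemma kss2_12_39 : ksP 2 + ksP 12 + ksP 39 = 1 :=
  lift_sum_one _ _ _ _ _ _ (triad_sum 2 3 6 (ksU 2) (ksU 12) (ksU 39)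
    (by norm_num) (by norm_num) (by norm_num) (by decide))
lemma kss2_23_32 : ksP 2 + ksP 23 + ksP 32 = 1 :=
  lift_sum_one _ _ _ _ _ _ (triad_sum 2 3 6 (ksU 2) (ksU 23) (ksU 32)
    (by norm_num) (by norm_num) (by norm_num) (by decide))
lemma kss3_15_36 : ksP 3 + ksP 15 + ksP 36 = 1 :=
  lift_sum_one _ _ _ _ _ _ (triad_sum 1 5 5 (ksU 3) (ksU 15) (ksU 36)
    (by norm_num) (by norm_num) (by norm_num) (by decide))
lemma kss3_16_18 : ksP 3 + ksP 16 + ksP 18 = 1 :=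
  lift_sum_one _ _ _ _ _ _ (triad_sum 1 2 2 (ksU 3) (ksU 16) (ksU 18)
    (by norm_num) (by norm_num) (by norm_num) (by decide))
lemma kss3_19_35 : ksP 3 + ksP 19 + ksP 35 = 1 :=
  lift_sum_one _ _ _ _ _ _ (triad_sum 1 5 5 (ksU 3) (ksU 19) (ksU 35)
    (by norm_num) (by norm_num) (by norm_num) (by decide))
lemma kss4_14_38 : ksP 4 + ksP 14 + ksP 38 = 1 :=
  lift_sum_one _ _ _ _ _ _ (triad_sum 2 3 6 (ksU 4) (ksU 14) (ksU 38)
    (by norm_num) (by norm_num) (by norm_num) (by decide))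
lemma kss4_21_33 : ksP 4 + ksP 21 + ksP 33 = 1 :=
  lift_sum_one _ _ _ _ _ _ (triad_sum 2 3 6 (ksU 4) (ksU 21) (ksU 33)
    (by norm_num) (by norm_num) (by norm_num) (by decide))
lemma kss5_6_17 : ksP 5 + ksP 6 + ksP 17 = 1 :=
  lift_sum_one _ _ _ _ _ _ (triad_sum 5 5 1 (ksU 5) (ksU 6) (ksU 17)
    (by norm_num) (by norm_num) (by norm_num) (by decide))
lemma kss8_34_41 : ksP 8 + ksP 34 + ksP 41 = 1 :=
  lift_sum_one _ _ _ _ _ _ (triad_sum 9 9 9 (ksU 8) (ksU 34) (ksU 41)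
    (by norm_num) (by norm_num) (by norm_num) (by decide))
lemma kss9_18_21 : ksP 9 + ksP 18 + ksP 21 = 1 :=
  lift_sum_one _ _ _ _ _ _ (triad_sum 6 2 3 (ksU 9) (ksU 18) (ksU 21)
    (by norm_num) (by norm_num) (by norm_num) (by decide))
lemma kss10_16_23 : ksP 10 + ksP 16 + ksP 23 = 1 :=
  lift_sum_one _ _ _ _ _ _ (triad_sum 6 2 3 (ksU 10) (ksU 16) (ksU 23)
    (by norm_num) (by norm_num) (by norm_num) (by decide))
lemma kss11_31_42 : ksP 11 + ksP 31 + ksP 42 = 1 :=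
  lift_sum_one _ _ _ _ _ _ (triad_sum 9 9 9 (ksU 11) (ksU 31) (ksU 42)
    (by norm_num) (by norm_num) (by norm_num) (by decide))
lemma kss12_18_26 : ksP 12 + ksP 18 + ksP 26 = 1 :=
  lift_sum_one _ _ _ _ _ _ (triad_sum 3 2 6 (ksU 12) (ksU 18) (ksU 26)
    (by norm_num) (by norm_num) (by norm_num) (by decide))
lemma kss13_20_23 : ksP 13 + ksP 20 + ksP 23 = 1 :=
  lift_sum_one _ _ _ _ _ _ (triad_sum 2 6 3 (ksU 13) (ksU 20) (ksU 23)
    (by norm_num) (by norm_num) (by norm_num) (by decide))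
lemma kss13_21_24 : ksP 13 + ksP 21 + ksP 24 = 1 :=
  lift_sum_one _ _ _ _ _ _ (triad_sum 2 3 6 (ksU 13) (ksU 21) (ksU 24)
    (by norm_num) (by norm_num) (by norm_num) (by decide))
lemma kss14_16_27 : ksP 14 + ksP 16 + ksP 27 = 1 :=
  lift_sum_one _ _ _ _ _ _ (triad_sum 3 2 6 (ksU 14) (ksU 16) (ksU 27)
    (by norm_num) (by norm_num) (by norm_num) (by decide))
lemma kss25_29_40 : ksP 25 + ksP 29 + ksP 40 = 1 :=
  lift_sum_one _ _ _ _ _ _ (triad_sum 9 9 9 (ksU 25) (ksU 29) (ksU 40)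
    (by norm_num) (by norm_num) (by norm_num) (by decide))
lemma kss28_30_37 : ksP 28 + ksP 30 + ksP 37 = 1 :=
  lift_sum_one _ _ _ _ _ _ (triad_sum 9 9 9 (ksU 28) (ksU 30) (ksU 37)
    (by norm_num) (by norm_num) (by norm_num) (by decide))

lemma ks_unsat (b : Fin 43 → Prop)
    (e0_3 : b 0 ∨ b 3)
    (e0_17 : b 0 ∨ b 17)
    (e1_9 : b 1 ∨ b 9)
    (e1_27 : b 1 ∨ b 27)
    (e2_8 : b 2 ∨ b 8)
    (e2_17 : b 2 ∨ b 17)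
    (e2_28 : b 2 ∨ b 28)
    (e3_16 : b 3 ∨ b 16)
    (e3_17 : b 3 ∨ b 17)
    (e3_18 : b 3 ∨ b 18)
    (e4_11 : b 4 ∨ b 11)
    (e4_14 : b 4 ∨ b 14)
    (e4_17 : b 4 ∨ b 17)
    (e4_21 : b 4 ∨ b 21)
    (e5_10 : b 5 ∨ b 10)
    (e5_26 : b 5 ∨ b 26)
    (e5_30 : b 5 ∨ b 30)
    (e5_41 : b 5 ∨ b 41)
    (e6_24 : b 6 ∨ b 24)
    (e6_31 : b 6 ∨ b 31)
    (e6_40 : b 6 ∨ b 40)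
    (e7_34 : b 7 ∨ b 34)
    (e7_37 : b 7 ∨ b 37)
    (e8_36 : b 8 ∨ b 36)
    (e11_35 : b 11 ∨ b 35)
    (e12_22 : b 12 ∨ b 22)
    (e13_21 : b 13 ∨ b 21)
    (e13_23 : b 13 ∨ b 23)
    (e13_41 : b 13 ∨ b 41)
    (e13_42 : b 13 ∨ b 42)
    (e14_22 : b 14 ∨ b 22)
    (e15_33 : b 15 ∨ b 33)
    (e15_39 : b 15 ∨ b 39)
    (e15_42 : b 15 ∨ b 42)
    (e16_23 : b 16 ∨ b 23)
    (e16_34 : b 16 ∨ b 34)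
    (e18_21 : b 18 ∨ b 21)
    (e18_31 : b 18 ∨ b 31)
    (e18_37 : b 18 ∨ b 37)
    (e19_29 : b 19 ∨ b 29)
    (e19_32 : b 19 ∨ b 32)
    (e19_38 : b 19 ∨ b 38)
    (e19_41 : b 19 ∨ b 41)
    (e20_36 : b 20 ∨ b 36)
    (e22_30 : b 22 ∨ b 30)
    (e25_36 : b 25 ∨ b 36)
    (e28_35 : b 28 ∨ b 35)
    (t0_13_22 : ¬ b 0 ∨ ¬ b 13 ∨ ¬ b 22)
    (t1_7_17 : ¬ b 1 ∨ ¬ b 7 ∨ ¬ b 17)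
    (t2_4_17 : ¬ b 2 ∨ ¬ b 4 ∨ ¬ b 17)
    (t2_12_39 : ¬ b 2 ∨ ¬ b 12 ∨ ¬ b 39)
    (t2_23_32 : ¬ b 2 ∨ ¬ b 23 ∨ ¬ b 32)
    (t3_15_36 : ¬ b 3 ∨ ¬ b 15 ∨ ¬ b 36)
    (t3_16_18 : ¬ b 3 ∨ ¬ b 16 ∨ ¬ b 18)
    (t3_19_35 : ¬ b 3 ∨ ¬ b 19 ∨ ¬ b 35)
    (t4_14_38 : ¬ b 4 ∨ ¬ b 14 ∨ ¬ b 38)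
    (t4_21_33 : ¬ b 4 ∨ ¬ b 21 ∨ ¬ b 33)
    (t5_6_17 : ¬ b 5 ∨ ¬ b 6 ∨ ¬ b 17)
    (t8_34_41 : ¬ b 8 ∨ ¬ b 34 ∨ ¬ b 41)
    (t9_18_21 : ¬ b 9 ∨ ¬ b 18 ∨ ¬ b 21)
    (t10_16_23 : ¬ b 10 ∨ ¬ b 16 ∨ ¬ b 23)
    (t11_31_42 : ¬ b 11 ∨ ¬ b 31 ∨ ¬ b 42)
    (t12_18_26 : ¬ b 12 ∨ ¬ b 18 ∨ ¬ b 26)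
    (t13_20_23 : ¬ b 13 ∨ ¬ b 20 ∨ ¬ b 23)
    (t13_21_24 : ¬ b 13 ∨ ¬ b 21 ∨ ¬ b 24)
    (t14_16_27 : ¬ b 14 ∨ ¬ b 16 ∨ ¬ b 27)
    (t25_29_40 : ¬ b 25 ∨ ¬ b 29 ∨ ¬ b 40)
    (t28_30_37 : ¬ b 28 ∨ ¬ b 30 ∨ ¬ b 37) : False := by
  by_cases hb3 : b 3
  · -- b 3 true
    by_cases hb4 : b 4
    · -- b 4 true
      by_cases hb13 : b 13
      · -- b 13 true
        by_cases hb17 : b 17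
        · -- b 17 true
          have hn2 := tr1 (t2_4_17) hb4 hb17
          have hb8 := (e2_8).resolve_left hn2
          have hb28 := (e2_28).resolve_left hn2
          by_cases hb18 : b 18
          · -- b 18 true
            have hn16 := tr2 (t3_16_18) hb3 hb18
            have hb23 := (e16_23).resolve_left hn16
            have hb34 := (e16_34).resolve_left hn16
            have hn41 := tr3 (t8_34_41) hb8 hb34
            have hb5 := (e5_41).resolve_right hn41
            have hb19 := (e19_41).resolve_right hn41
            have hn35 := tr3 (t3_19_35) hb3 hb19
            have hb11 := (e11_35).resolve_right hn35
            have hn6 := tr2 (t5_6_17) hb5 hb17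
            have hb24 := (e6_24).resolve_left hn6
            have hb31 := (e6_31).resolve_left hn6
            have hb40 := (e6_40).resolve_left hn6
            have hn42 := tr3 (t11_31_42) hb11 hb31
            have hb15 := (e15_42).resolve_right hn42
            have hn36 := tr3 (t3_15_36) hb3 hb15
            have hb20 := (e20_36).resolve_right hn36
            exact (t13_20_23).elim (fun h => h hb13) (fun h => h.elim (fun h => h hb20) (fun h => h hb23))
          · have hn18 : ¬ b 18 := hb18
            have hb21 := (e18_21).resolve_left hn18
            have hb31 := (e18_31).resolve_left hn18
            have hb37 := (e18_37).resolve_left hn18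
            have hn33 := tr3 (t4_21_33) hb4 hb21
            have hb15 := (e15_33).resolve_right hn33
            have hn36 := tr3 (t3_15_36) hb3 hb15
            have hb20 := (e20_36).resolve_right hn36
            have hb25 := (e25_36).resolve_right hn36
            have hn23 := tr3 (t13_20_23) hb13 hb20
            have hb16 := (e16_23).resolve_right hn23
            have hn24 := tr3 (t13_21_24) hb13 hb21
            have hb6 := (e6_24).resolve_right hn24
            have hn5 := tr1 (t5_6_17) hb6 hb17
            have hb10 := (e5_10).resolve_left hn5
            have hb26 := (e5_26).resolve_left hn5
            have hb30 := (e5_30).resolve_left hn5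
            exact (t28_30_37).elim (fun h => h hb28) (fun h => h.elim (fun h => h hb30) (fun h => h hb37))
        · have hn17 : ¬ b 17 := hb17
          have hb0 := (e0_17).resolve_right hn17
          have hb2 := (e2_17).resolve_right hn17
          have hn22 := tr3 (t0_13_22) hb0 hb13
          have hb12 := (e12_22).resolve_right hn22
          have hb14 := (e14_22).resolve_right hn22
          have hb30 := (e22_30).resolve_left hn22
          have hn39 := tr3 (t2_12_39) hb2 hb12
          have hb15 := (e15_39).resolve_right hn39
          have hn36 := tr3 (t3_15_36) hb3 hb15
          have hb8 := (e8_36).resolve_right hn36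
          have hb20 := (e20_36).resolve_right hn36
          have hb25 := (e25_36).resolve_right hn36
          have hn38 := tr3 (t4_14_38) hb4 hb14
          have hb19 := (e19_38).resolve_right hn38
          have hn35 := tr3 (t3_19_35) hb3 hb19
          have hb11 := (e11_35).resolve_right hn35
          have hb28 := (e28_35).resolve_right hn35
          have hn23 := tr3 (t13_20_23) hb13 hb20
          have hb16 := (e16_23).resolve_right hn23
          have hn18 := tr3 (t3_16_18) hb3 hb16
          have hb21 := (e18_21).resolve_left hn18
          have hb31 := (e18_31).resolve_left hn18
          have hb37 := (e18_37).resolve_left hn18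
          exact (t28_30_37).elim (fun h => h hb28) (fun h => h.elim (fun h => h hb30) (fun h => h hb37))
      · have hn13 : ¬ b 13 := hb13
        have hb21 := (e13_21).resolve_left hn13
        have hb23 := (e13_23).resolve_left hn13
        have hb41 := (e13_41).resolve_left hn13
        have hb42 := (e13_42).resolve_left hn13
        have hn33 := tr3 (t4_21_33) hb4 hb21
        have hb15 := (e15_33).resolve_right hn33
        have hn36 := tr3 (t3_15_36) hb3 hb15
        have hb8 := (e8_36).resolve_right hn36
        have hb20 := (e20_36).resolve_right hn36
        have hb25 := (e25_36).resolve_right hn36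
        have hn34 := tr2 (t8_34_41) hb8 hb41
        have hb7 := (e7_34).resolve_right hn34
        have hb16 := (e16_34).resolve_right hn34
        have hn18 := tr3 (t3_16_18) hb3 hb16
        have hb31 := (e18_31).resolve_left hn18
        have hb37 := (e18_37).resolve_left hn18
        have hn10 := tr1 (t10_16_23) hb16 hb23
        have hb5 := (e5_10).resolve_right hn10
        have hn11 := tr1 (t11_31_42) hb31 hb42
        have hb35 := (e11_35).resolve_left hn11
        have hn19 := tr2 (t3_19_35) hb3 hb35
        have hb29 := (e19_29).resolve_left hn19
        have hb32 := (e19_32).resolve_left hn19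
        have hb38 := (e19_38).resolve_left hn19
        have hn2 := tr1 (t2_23_32) hb23 hb32
        have hb17 := (e2_17).resolve_left hn2
        have hb28 := (e2_28).resolve_left hn2
        have hn1 := tr1 (t1_7_17) hb7 hb17
        have hb9 := (e1_9).resolve_left hn1
        have hb27 := (e1_27).resolve_left hn1
        have hn14 := tr2 (t4_14_38) hb4 hb38
        have hb22 := (e14_22).resolve_left hn14
        have hn6 := tr2 (t5_6_17) hb5 hb17
        have hb24 := (e6_24).resolve_left hn6
        have hb40 := (e6_40).resolve_left hn6
        exact (t25_29_40).elim (fun h => h hb25) (fun h => h.elim (fun h => h hb29) (fun h => h hb40))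
    · have hn4 : ¬ b 4 := hb4
      have hb11 := (e4_11).resolve_left hn4
      have hb14 := (e4_14).resolve_left hn4
      have hb17 := (e4_17).resolve_left hn4
      have hb21 := (e4_21).resolve_left hn4
      by_cases hb13 : b 13
      · -- b 13 true
        have hn24 := tr3 (t13_21_24) hb13 hb21
        have hb6 := (e6_24).resolve_right hn24
        have hn5 := tr1 (t5_6_17) hb6 hb17
        have hb10 := (e5_10).resolve_left hn5
        have hb26 := (e5_26).resolve_left hn5
        have hb30 := (e5_30).resolve_left hn5
        have hb41 := (e5_41).resolve_left hn5
        by_cases hb18 : b 18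
        · -- b 18 true
          have hn16 := tr2 (t3_16_18) hb3 hb18
          have hb23 := (e16_23).resolve_left hn16
          have hb34 := (e16_34).resolve_left hn16
          have hn8 := tr1 (t8_34_41) hb34 hb41
          have hb2 := (e2_8).resolve_right hn8
          have hb36 := (e8_36).resolve_left hn8
          have hn32 := tr3 (t2_23_32) hb2 hb23
          have hb19 := (e19_32).resolve_right hn32
          have hn15 := tr2 (t3_15_36) hb3 hb36
          have hb33 := (e15_33).resolve_left hn15
          have hb39 := (e15_39).resolve_left hn15
          have hb42 := (e15_42).resolve_left hn15
          have hn12 := tr2 (t2_12_39) hb2 hb39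
          have hb22 := (e12_22).resolve_left hn12
          have hn0 := tr1 (t0_13_22) hb13 hb22
          have hn35 := tr3 (t3_19_35) hb3 hb19
          have hb28 := (e28_35).resolve_right hn35
          have hn9 := tr1 (t9_18_21) hb18 hb21
          have hb1 := (e1_9).resolve_right hn9
          have hn7 := tr2 (t1_7_17) hb1 hb17
          have hb37 := (e7_37).resolve_left hn7
          exact (t28_30_37).elim (fun h => h hb28) (fun h => h.elim (fun h => h hb30) (fun h => h hb37))
        · have hn18 : ¬ b 18 := hb18
          have hb31 := (e18_31).resolve_left hn18
          have hb37 := (e18_37).resolve_left hn18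
          have hn42 := tr3 (t11_31_42) hb11 hb31
          have hb15 := (e15_42).resolve_right hn42
          have hn36 := tr3 (t3_15_36) hb3 hb15
          have hb8 := (e8_36).resolve_right hn36
          have hb20 := (e20_36).resolve_right hn36
          have hb25 := (e25_36).resolve_right hn36
          have hn34 := tr2 (t8_34_41) hb8 hb41
          have hb7 := (e7_34).resolve_right hn34
          have hb16 := (e16_34).resolve_right hn34
          have hn1 := tr1 (t1_7_17) hb7 hb17
          have hb9 := (e1_9).resolve_left hn1
          have hb27 := (e1_27).resolve_left hn1
          exact (t14_16_27).elim (fun h => h hb14) (fun h => h.elim (fun h => h hb16) (fun h => h hb27))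
      · have hn13 : ¬ b 13 := hb13
        have hb23 := (e13_23).resolve_left hn13
        have hb41 := (e13_41).resolve_left hn13
        have hb42 := (e13_42).resolve_left hn13
        have hn31 := tr2 (t11_31_42) hb11 hb42
        have hb6 := (e6_31).resolve_right hn31
        have hb18 := (e18_31).resolve_right hn31
        have hn16 := tr2 (t3_16_18) hb3 hb18
        have hb34 := (e16_34).resolve_left hn16
        have hn5 := tr1 (t5_6_17) hb6 hb17
        have hb10 := (e5_10).resolve_left hn5
        have hb26 := (e5_26).resolve_left hn5
        have hb30 := (e5_30).resolve_left hn5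
        have hn8 := tr1 (t8_34_41) hb34 hb41
        have hb2 := (e2_8).resolve_right hn8
        have hb36 := (e8_36).resolve_left hn8
        have hn32 := tr3 (t2_23_32) hb2 hb23
        have hb19 := (e19_32).resolve_right hn32
        have hn15 := tr2 (t3_15_36) hb3 hb36
        have hb33 := (e15_33).resolve_left hn15
        have hb39 := (e15_39).resolve_left hn15
        have hn12 := tr2 (t2_12_39) hb2 hb39
        have hb22 := (e12_22).resolve_left hn12
        have hn35 := tr3 (t3_19_35) hb3 hb19
        have hb28 := (e28_35).resolve_right hn35
        have hn9 := tr1 (t9_18_21) hb18 hb21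
        have hb1 := (e1_9).resolve_right hn9
        have hn7 := tr2 (t1_7_17) hb1 hb17
        have hb37 := (e7_37).resolve_left hn7
        exact (t28_30_37).elim (fun h => h hb28) (fun h => h.elim (fun h => h hb30) (fun h => h hb37))
  · have hn3 : ¬ b 3 := hb3
    have hb0 := (e0_3).resolve_right hn3
    have hb16 := (e3_16).resolve_left hn3
    have hb17 := (e3_17).resolve_left hn3
    have hb18 := (e3_18).resolve_left hn3
    by_cases hb4 : b 4
    · -- b 4 true
      have hn2 := tr1 (t2_4_17) hb4 hb17
      have hb8 := (e2_8).resolve_left hn2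
      have hb28 := (e2_28).resolve_left hn2
      by_cases hb13 : b 13
      · -- b 13 true
        have hn22 := tr3 (t0_13_22) hb0 hb13
        have hb12 := (e12_22).resolve_right hn22
        have hb14 := (e14_22).resolve_right hn22
        have hb30 := (e22_30).resolve_left hn22
        have hn38 := tr3 (t4_14_38) hb4 hb14
        have hb19 := (e19_38).resolve_right hn38
        have hn26 := tr3 (t12_18_26) hb12 hb18
        have hb5 := (e5_26).resolve_right hn26
        have hn6 := tr2 (t5_6_17) hb5 hb17
        have hb24 := (e6_24).resolve_left hn6
        have hb31 := (e6_31).resolve_left hn6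
        have hb40 := (e6_40).resolve_left hn6
        have hn21 := tr2 (t13_21_24) hb13 hb24
        have hn27 := tr3 (t14_16_27) hb14 hb16
        have hb1 := (e1_27).resolve_right hn27
        have hn7 := tr2 (t1_7_17) hb1 hb17
        have hb34 := (e7_34).resolve_left hn7
        have hb37 := (e7_37).resolve_left hn7
        exact (t28_30_37).elim (fun h => h hb28) (fun h => h.elim (fun h => h hb30) (fun h => h hb37))
      · have hn13 : ¬ b 13 := hb13
        have hb21 := (e13_21).resolve_left hn13
        have hb23 := (e13_23).resolve_left hn13
        have hb41 := (e13_41).resolve_left hn13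
        have hb42 := (e13_42).resolve_left hn13
        have hn33 := tr3 (t4_21_33) hb4 hb21
        have hb15 := (e15_33).resolve_right hn33
        have hn34 := tr2 (t8_34_41) hb8 hb41
        have hb7 := (e7_34).resolve_right hn34
        have hn1 := tr1 (t1_7_17) hb7 hb17
        have hb9 := (e1_9).resolve_left hn1
        exact (t9_18_21).elim (fun h => h hb9) (fun h => h.elim (fun h => h hb18) (fun h => h hb21))
    · have hn4 : ¬ b 4 := hb4
      have hb11 := (e4_11).resolve_left hn4
      have hb14 := (e4_14).resolve_left hn4
      have hb21 := (e4_21).resolve_left hn4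
      have hn9 := tr1 (t9_18_21) hb18 hb21
      have hb1 := (e1_9).resolve_right hn9
      have hn7 := tr2 (t1_7_17) hb1 hb17
      have hb34 := (e7_34).resolve_left hn7
      have hb37 := (e7_37).resolve_left hn7
      have hn27 := tr3 (t14_16_27) hb14 hb16
      by_cases hb13 : b 13
      · -- b 13 true
        have hn22 := tr3 (t0_13_22) hb0 hb13
        have hb12 := (e12_22).resolve_right hn22
        have hb30 := (e22_30).resolve_left hn22
        have hn26 := tr3 (t12_18_26) hb12 hb18
        have hb5 := (e5_26).resolve_right hn26
        have hn6 := tr2 (t5_6_17) hb5 hb17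
        have hb24 := (e6_24).resolve_left hn6
        exact (t13_21_24).elim (fun h => h hb13) (fun h => h.elim (fun h => h hb21) (fun h => h hb24))
      · have hn13 : ¬ b 13 := hb13
        have hb23 := (e13_23).resolve_left hn13
        have hb41 := (e13_41).resolve_left hn13
        have hb42 := (e13_42).resolve_left hn13
        have hn8 := tr1 (t8_34_41) hb34 hb41
        have hb2 := (e2_8).resolve_right hn8
        have hb36 := (e8_36).resolve_left hn8
        have hn32 := tr3 (t2_23_32) hb2 hb23
        have hb19 := (e19_32).resolve_right hn32
        have hn10 := tr1 (t10_16_23) hb16 hb23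
        have hb5 := (e5_10).resolve_right hn10
        have hn6 := tr2 (t5_6_17) hb5 hb17
        have hb24 := (e6_24).resolve_left hn6
        have hb31 := (e6_31).resolve_left hn6
        exact (t11_31_42).elim (fun h => h hb11) (fun h => h.elim (fun h => h hb31) (fun h => h hb42))

end KSAux

/-- The partial ring `M₃(ℤ[1/30])_sym` of symmetric matrices over the smallest subring of
`ℚ` containing `1/30` has no prime partial ideal. -/
theorem no_sym_prime_partial_ideal_M3_Zinv30 :
    ¬ ∃ p : Set (Matrix (Fin 3) (Fin 3) (Subring.closure {(1/30 : ℚ)})),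
        IsSymPrimePartialIdeal p := by
  rintro ⟨p, hp⟩
  refine ks_unsat (fun i => ksP i ∈ p) ?_ ?_ ?_ ?_ ?_ ?_ ?_ ?_ ?_ ?_ ?_ ?_ ?_ ?_ ?_ ?_ ?_ ?_ ?_ ?_ ?_ ?_ ?_ ?_ ?_ ?_ ?_ ?_ ?_ ?_ ?_ ?_ ?_ ?_ ?_ ?_ ?_ ?_ ?_ ?_ ?_ ?_ ?_ ?_ ?_ ?_ ?_ ?_ ?_ ?_ ?_ ?_ ?_ ?_ ?_ ?_ ?_ ?_ ?_ ?_ ?_ ?_ ?_ ?_ ?_ ?_ ?_ ?_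
  · exact ks_pair_mem hp (ksP_symm 0) (ksP_symm 3) kso0_3
  · exact ks_pair_mem hp (ksP_symm 0) (ksP_symm 17) kso0_17
  · exact ks_pair_mem hp (ksP_symm 1) (ksP_symm 9) kso1_9
  · exact ks_pair_mem hp (ksP_symm 1) (ksP_symm 27) kso1_27
  · exact ks_pair_mem hp (ksP_symm 2) (ksP_symm 8) kso2_8
  · exact ks_pair_mem hp (ksP_symm 2) (ksP_symm 17) kso2_17
  · exact ks_pair_mem hp (ksP_symm 2) (ksP_symm 28) kso2_28
  · exact ks_pair_mem hp (ksP_symm 3) (ksP_symm 16) kso3_16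
  · exact ks_pair_mem hp (ksP_symm 3) (ksP_symm 17) kso3_17
  · exact ks_pair_mem hp (ksP_symm 3) (ksP_symm 18) kso3_18
  · exact ks_pair_mem hp (ksP_symm 4) (ksP_symm 11) kso4_11
  · exact ks_pair_mem hp (ksP_symm 4) (ksP_symm 14) kso4_14
  · exact ks_pair_mem hp (ksP_symm 4) (ksP_symm 17) kso4_17
  · exact ks_pair_mem hp (ksP_symm 4) (ksP_symm 21) kso4_21
  · exact ks_pair_mem hp (ksP_symm 5) (ksP_symm 10) kso5_10
  · exact ks_pair_mem hp (ksP_symm 5) (ksP_symm 26) kso5_26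
  · exact ks_pair_mem hp (ksP_symm 5) (ksP_symm 30) kso5_30
  · exact ks_pair_mem hp (ksP_symm 5) (ksP_symm 41) kso5_41
  · exact ks_pair_mem hp (ksP_symm 6) (ksP_symm 24) kso6_24
  · exact ks_pair_mem hp (ksP_symm 6) (ksP_symm 31) kso6_31
  · exact ks_pair_mem hp (ksP_symm 6) (ksP_symm 40) kso6_40
  · exact ks_pair_mem hp (ksP_symm 7) (ksP_symm 34) kso7_34
  · exact ks_pair_mem hp (ksP_symm 7) (ksP_symm 37) kso7_37
  · exact ks_pair_mem hp (ksP_symm 8) (ksP_symm 36) kso8_36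
  · exact ks_pair_mem hp (ksP_symm 11) (ksP_symm 35) kso11_35
  · exact ks_pair_mem hp (ksP_symm 12) (ksP_symm 22) kso12_22
  · exact ks_pair_mem hp (ksP_symm 13) (ksP_symm 21) kso13_21
  · exact ks_pair_mem hp (ksP_symm 13) (ksP_symm 23) kso13_23
  · exact ks_pair_mem hp (ksP_symm 13) (ksP_symm 41) kso13_41
  · exact ks_pair_mem hp (ksP_symm 13) (ksP_symm 42) kso13_42
  · exact ks_pair_mem hp (ksP_symm 14) (ksP_symm 22) kso14_22
  · exact ks_pair_mem hp (ksP_symm 15) (ksP_symm 33) kso15_33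
  · exact ks_pair_mem hp (ksP_symm 15) (ksP_symm 39) kso15_39
  · exact ks_pair_mem hp (ksP_symm 15) (ksP_symm 42) kso15_42
  · exact ks_pair_mem hp (ksP_symm 16) (ksP_symm 23) kso16_23
  · exact ks_pair_mem hp (ksP_symm 16) (ksP_symm 34) kso16_34
  · exact ks_pair_mem hp (ksP_symm 18) (ksP_symm 21) kso18_21
  · exact ks_pair_mem hp (ksP_symm 18) (ksP_symm 31) kso18_31
  · exact ks_pair_mem hp (ksP_symm 18) (ksP_symm 37) kso18_37
  · exact ks_pair_mem hp (ksP_symm 19) (ksP_symm 29) kso19_29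
  · exact ks_pair_mem hp (ksP_symm 19) (ksP_symm 32) kso19_32
  · exact ks_pair_mem hp (ksP_symm 19) (ksP_symm 38) kso19_38
  · exact ks_pair_mem hp (ksP_symm 19) (ksP_symm 41) kso19_41
  · exact ks_pair_mem hp (ksP_symm 20) (ksP_symm 36) kso20_36
  · exact ks_pair_mem hp (ksP_symm 22) (ksP_symm 30) kso22_30
  · exact ks_pair_mem hp (ksP_symm 25) (ksP_symm 36) kso25_36
  · exact ks_pair_mem hp (ksP_symm 28) (ksP_symm 35) kso28_35
  · exact ks_triad_not_mem hp (ksP_symm 0) (ksP_symm 13) (ksP_symm 22) kso0_13 kso0_22 kso13_22 kss0_13_22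
  · exact ks_triad_not_mem hp (ksP_symm 1) (ksP_symm 7) (ksP_symm 17) kso1_7 kso1_17 kso7_17 kss1_7_17
  · exact ks_triad_not_mem hp (ksP_symm 2) (ksP_symm 4) (ksP_symm 17) kso2_4 kso2_17 kso4_17 kss2_4_17
  · exact ks_triad_not_mem hp (ksP_symm 2) (ksP_symm 12) (ksP_symm 39) kso2_12 kso2_39 kso12_39 kss2_12_39
  · exact ks_triad_not_mem hp (ksP_symm 2) (ksP_symm 23) (ksP_symm 32) kso2_23 kso2_32 kso23_32 kss2_23_32
  · exact ks_triad_not_mem hp (ksP_symm 3) (ksP_symm 15) (ksP_symm 36) kso3_15 kso3_36 kso15_36 kss3_15_36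
  · exact ks_triad_not_mem hp (ksP_symm 3) (ksP_symm 16) (ksP_symm 18) kso3_16 kso3_18 kso16_18 kss3_16_18
  · exact ks_triad_not_mem hp (ksP_symm 3) (ksP_symm 19) (ksP_symm 35) kso3_19 kso3_35 kso19_35 kss3_19_35
  · exact ks_triad_not_mem hp (ksP_symm 4) (ksP_symm 14) (ksP_symm 38) kso4_14 kso4_38 kso14_38 kss4_14_38
  · exact ks_triad_not_mem hp (ksP_symm 4) (ksP_symm 21) (ksP_symm 33) kso4_21 kso4_33 kso21_33 kss4_21_33
  · exact ks_triad_not_mem hp (ksP_symm 5) (ksP_symm 6) (ksP_symm 17) kso5_6 kso5_17 kso6_17 kss5_6_17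
  · exact ks_triad_not_mem hp (ksP_symm 8) (ksP_symm 34) (ksP_symm 41) kso8_34 kso8_41 kso34_41 kss8_34_41
  · exact ks_triad_not_mem hp (ksP_symm 9) (ksP_symm 18) (ksP_symm 21) kso9_18 kso9_21 kso18_21 kss9_18_21
  · exact ks_triad_not_mem hp (ksP_symm 10) (ksP_symm 16) (ksP_symm 23) kso10_16 kso10_23 kso16_23 kss10_16_23
  · exact ks_triad_not_mem hp (ksP_symm 11) (ksP_symm 31) (ksP_symm 42) kso11_31 kso11_42 kso31_42 kss11_31_42
  · exact ks_triad_not_mem hp (ksP_symm 12) (ksP_symm 18) (ksP_symm 26) kso12_18 kso12_26 kso18_26 kss12_18_26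
  · exact ks_triad_not_mem hp (ksP_symm 13) (ksP_symm 20) (ksP_symm 23) kso13_20 kso13_23 kso20_23 kss13_20_23
  · exact ks_triad_not_mem hp (ksP_symm 13) (ksP_symm 21) (ksP_symm 24) kso13_21 kso13_24 kso21_24 kss13_21_24
  · exact ks_triad_not_mem hp (ksP_symm 14) (ksP_symm 16) (ksP_symm 27) kso14_16 kso14_27 kso16_27 kss14_16_27
  · exact ks_triad_not_mem hp (ksP_symm 25) (ksP_symm 29) (ksP_symm 40) kso25_29 kso25_40 kso29_40 kss25_29_40
  · exact ks_triad_not_mem hp (ksP_symm 28) (ksP_symm 30) (ksP_symm 37) kso28_30 kso28_37 kso30_37 kss28_30_37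
end
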